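/- arXiv:1210.0377 — 6 statements merged into one kernel-verified Lean document; each statement's English description precedes it below -/
import Mathlib

section
/- If T1 is a semi-standard Young tableau of skew shape κ/λ and T2 is a semi-standard Young tableau of skew shape μ/ν (both with entries in {1,...,n}), then the tableau insertion T1 ⊠ T2, obtained by concatenating corresponding rows and sorting each row weakly increasingly (treating skew boxes as smaller than all entries), is a semi-standard Young tableau of skew shape (κ+μ)/(λ+ν). -/
/-!
Write `T.shapeLE x i` for the number of cells in row `i` of `T` that are skew boxes or carry an
entry `≤ x`. In a tableau with sorted rows, column strictness is the interlacing
`T.shapeLE (x + 1) (i + 1) ≤ T.shapeLE x i`. Sorting a concatenation of rows adds these counts,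
so the counts of `T1 ⊠ T2` are the sums of those of `T1` and `T2`, and interlacing inequalities add.
-/

open scoped BigOperators

/-- A partition: a weakly decreasing sequence of naturals that is eventually zero. -/
def IsPartition (f : ℕ → ℕ) : Prop :=
  (∀ i j, i ≤ j → f j ≤ f i) ∧ ∃ N, ∀ i, N ≤ i → f i = 0

/-- Data of a (skew) filling with entries bounded by `n`: the inner shape `inner`, and for
each row the weakly increasing list of its entries.  The outer shape of the filling is
`inner i + (row i).length`, so skew boxes sit to the left of all entries of a row. -/
structure SkewTab (n : ℕ) where
  inner : ℕ → ℕ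
  row : ℕ → List ℕ

namespace SkewTab

variable {n : ℕ}

/-- The outer shape. -/
def outer (T : SkewTab n) : ℕ → ℕ := fun i => T.inner i + (T.row i).length

/-- The entry in row `i`, column `j` (0-indexed); meaningful for `inner i ≤ j < outer i`. -/
def entry (T : SkewTab n) (i j : ℕ) : ℕ := (T.row i).getD (j - T.inner i) 0

/-- `T` is a semistandard Young tableau of skew shape `outer/inner` with entries in
`{1,…,n}`: both shapes are partitions, rows are weakly increasing and columns are
strictly increasing. -/
def IsSSYT (T : SkewTab n) : Prop :=
  IsPartition T.inner ∧ IsPartition T.outer ∧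
  (∀ i, (T.row i).Pairwise (· ≤ ·)) ∧
  (∀ i, ∀ x ∈ T.row i, 1 ≤ x ∧ x ≤ n) ∧
  (∀ i j, T.inner i ≤ j → j < T.outer i → T.inner (i+1) ≤ j → j < T.outer (i+1) →
    T.entry i j < T.entry (i+1) j)

/-- Tableau insertion `T1 ⊠ T2`: concatenate corresponding rows and sort each row
weakly increasingly; the skew boxes (inner shapes) add up and are pushed to the left,
i.e. treated as smaller than all numbered entries. -/
def ins (T1 T2 : SkewTab n) : SkewTab n where
  inner := fun i => T1.inner i + T2.inner i
  row := fun i => (T1.row i ++ T2.row i).mergeSort (fun a b => decide (a ≤ b))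

/-- The empty tableau. -/
def empty : SkewTab n := ⟨fun _ => 0, fun _ => []⟩

/-- The weight of `T`: `wt T k` is the number of boxes with entry `k`. -/
noncomputable def wt (T : SkewTab n) (k : ℕ) : ℕ := ∑ᶠ i, (T.row i).count k

/-- The `c`-th column of `T` (0-indexed), viewed as a single-column skew tableau
(keeping its skew boxes). -/
def col (T : SkewTab n) (c : ℕ) : SkewTab n where
  inner := fun i => if c < T.inner i then 1 else 0
  row := fun i =>
    if T.inner i ≤ c ∧ c < T.outer i then [(T.row i).getD (c - T.inner i) 0] else []

end SkewTab

/-- The set of SSYTs of shape `mu/nu` with entries in `{1,…,n}`. -/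
def Tabs (n : ℕ) (mu nu : ℕ → ℕ) : Set (SkewTab n) :=
  {T | T.IsSSYT ∧ T.inner = nu ∧ T.outer = mu}

/-- The monomial `x^w = x₁^{w₁} ⋯ xₙ^{wₙ}`. -/
noncomputable def xpow (n : ℕ) (w : Fin n → ℕ) : MvPolynomial (Fin n) ℤ :=
  ∏ k : Fin n, MvPolynomial.X k ^ w k

/-- The monomial `x^{w(T)}` attached to a tableau `T` (variable `x_k` corresponds to
the entry `k ∈ {1,…,n}`). -/
noncomputable def xwt {n : ℕ} (T : SkewTab n) : MvPolynomial (Fin n) ℤ :=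
  xpow n (fun k => T.wt ((k : ℕ) + 1))

/-- The skew Schur polynomial `s_{mu/nu}(x₁,…,xₙ) = Σ_T x^{w(T)}`. -/
noncomputable def schur (n : ℕ) (mu nu : ℕ → ℕ) : MvPolynomial (Fin n) ℤ :=
  ∑ᶠ T ∈ Tabs n mu nu, xwt T

/-- The Kostka number `K_{lam/mu,w}`: the number of SSYTs of shape `lam/mu` with
entries in `{1,…,n}` and weight `w`. -/
noncomputable def kostka (n : ℕ) (lam mu : ℕ → ℕ) (w : Fin n → ℕ) : ℕ :=
  Nat.card {T : SkewTab n // T ∈ Tabs n lam mu ∧ ∀ k : Fin n, T.wt ((k : ℕ) + 1) = w k}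

/-- The monomial symmetric polynomial `m_w`: the sum of `x^u` over the distinct
rearrangements `u` of `w`. -/
noncomputable def mSym (n : ℕ) (w : Fin n → ℕ) : MvPolynomial (Fin n) ℤ :=
  ∑ᶠ u ∈ {u : Fin n → ℕ | ∃ σ : Equiv.Perm (Fin n), u = w ∘ σ}, xpow n u

/-- The characteristic polynomial `χ(t) = ∏_{T ∈ T^n_{mu/nu}} (t − x^{w(T)})`. -/
noncomputable def charPoly (n : ℕ) (mu nu : ℕ → ℕ) : Polynomial (MvPolynomial (Fin n) ℤ) :=
  ∏ᶠ T ∈ Tabs n mu nu, (Polynomial.X - Polynomial.C (xwt T))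

/-- `mu/nu` sits inside `alpha/beta`: there is an injection `f` of column positions such
that for every row, column `j` of `mu/nu` has a cell (resp. a skew box) exactly when
column `f j` of `alpha/beta` does; i.e. every column of the diagram of `mu/nu` can be
found among the columns of the diagram of `alpha/beta`, counting multiplicities. -/
def SitsInside (mu nu alpha beta : ℕ → ℕ) : Prop :=
  ∃ f : ℕ → ℕ, Function.Injective f ∧
    ∀ j i, ((nu i ≤ j ∧ j < mu i) ↔ (beta i ≤ f j ∧ f j < alpha i)) ∧
      (j < nu i ↔ f j < beta i)

theorem List.Pairwise.getElem_le_iff_lt_countP {α : Type*} [LinearOrder α] {l : List α}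
    (hl : l.Pairwise (· ≤ ·)) {p : ℕ} (hp : p < l.length) (x : α) :
    l[p] ≤ x ↔ p < l.countP (· ≤ x) := by
  induction l generalizing p with
  | nil => simp at hp
  | cons a t ih =>
    obtain ⟨ha, ht⟩ := List.pairwise_cons.mp hl
    by_cases hax : a ≤ x
    · cases p with
      | zero => simp [hax]
      | succ p => simpa [hax] using ih ht (by simpa using hp)
    · have hgt : ∀ b ∈ a :: t, x < b := by
        simp only [List.mem_cons, forall_eq_or_imp]
        exact ⟨not_le.mp hax, fun b hb => (not_le.mp hax).trans_le (ha b hb)⟩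
      have hzero : (a :: t).countP (· ≤ x) = 0 :=
        List.countP_eq_zero.mpr fun b hb => by simpa using hgt b hb
      simpa [hzero] using hgt _ (List.getElem_mem hp)

theorem IsPartition.add {f g : ℕ → ℕ} (hf : IsPartition f) (hg : IsPartition g) :
    IsPartition (fun i => f i + g i) := by
  obtain ⟨N, hN⟩ := hf.2
  obtain ⟨M, hM⟩ := hg.2
  refine ⟨fun i j hij => Nat.add_le_add (hf.1 i j hij) (hg.1 i j hij), max N M, fun i hi => ?_⟩
  simp [hN i (le_of_max_le_left hi), hM i (le_of_max_le_right hi)]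

namespace SkewTab

variable {n : ℕ}

def shapeLE (T : SkewTab n) (x i : ℕ) : ℕ := T.inner i + (T.row i).countP (· ≤ x)

theorem shapeLE_le_outer (T : SkewTab n) (x i : ℕ) : T.shapeLE x i ≤ T.outer i :=
  Nat.add_le_add_left List.countP_le_length _

theorem entry_eq_getElem {T : SkewTab n} {i j : ℕ} (hij : T.inner i ≤ j) (hj : j < T.outer i) :
    T.entry i j = (T.row i)[j - T.inner i]'(by unfold outer at hj; omega) :=
  List.getD_eq_getElem _ _ _

theorem entry_mem_row {T : SkewTab n} {i j : ℕ} (hij : T.inner i ≤ j) (hj : j < T.outer i) :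
    T.entry i j ∈ T.row i := by
  rw [entry_eq_getElem hij hj]
  exact List.getElem_mem _

theorem entry_le_iff_lt_shapeLE {T : SkewTab n} {i j : ℕ} (hs : (T.row i).Pairwise (· ≤ ·))
    (hij : T.inner i ≤ j) (hj : j < T.outer i) (x : ℕ) :
    T.entry i j ≤ x ↔ j < T.shapeLE x i := by
  rw [entry_eq_getElem hij hj, hs.getElem_le_iff_lt_countP, shapeLE]
  omega

theorem IsSSYT.shapeLE_succ_le {T : SkewTab n} (hT : T.IsSSYT) (x i : ℕ) :
    T.shapeLE (x + 1) (i + 1) ≤ T.shapeLE x i := by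
  obtain ⟨hin, hout, hs, -, hcol⟩ := hT
  have hinner := hin.1 i (i + 1) i.le_succ
  have houter := hout.1 i (i + 1) i.le_succ
  -- otherwise column `j` of row `i + 1` holds an entry `≤ x + 1` below an entry `> x`
  by_contra! h
  set j := T.shapeLE x i
  have hj_inner : T.inner i ≤ j := Nat.le_add_right _ _
  have hj_outer : j < T.outer (i + 1) := h.trans_le (T.shapeLE_le_outer _ _)
  have hbelow : T.entry (i + 1) j ≤ x + 1 :=
    (entry_le_iff_lt_shapeLE (hs _) (hinner.trans hj_inner) hj_outer _).2 h
  have habove := hcol i j hj_inner (hj_outer.trans_le houter) (hinner.trans hj_inner) hj_outer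
  exact lt_irrefl j
    ((entry_le_iff_lt_shapeLE (hs i) hj_inner (hj_outer.trans_le houter) x).1 (by omega))

/-- Converse of `IsSSYT.shapeLE_succ_le`; positivity rules out an entry `0` in row `i + 1`,
which the interlacing does not see. -/
theorem entry_lt_entry_succ_of_shapeLE_le {T : SkewTab n} {i j : ℕ}
    (hs : (T.row i).Pairwise (· ≤ ·)) (hs' : (T.row (i + 1)).Pairwise (· ≤ ·))
    (hpos : ∀ y ∈ T.row (i + 1), 1 ≤ y)
    (hstrip : ∀ x, T.shapeLE (x + 1) (i + 1) ≤ T.shapeLE x i)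
    (h1 : T.inner i ≤ j) (h2 : j < T.outer i) (h3 : T.inner (i + 1) ≤ j)
    (h4 : j < T.outer (i + 1)) :
    T.entry i j < T.entry (i + 1) j := by
  obtain ⟨x, hx⟩ := Nat.exists_eq_add_of_le' (hpos _ (entry_mem_row h3 h4))
  have hbelow : j < T.shapeLE (x + 1) (i + 1) :=
    (entry_le_iff_lt_shapeLE hs' h3 h4 _).1 hx.le
  rw [hx, Nat.lt_succ_iff]
  exact (entry_le_iff_lt_shapeLE hs h1 h2 x).2 (hbelow.trans_le (hstrip x))

section Insertion

variable (T1 T2 : SkewTab n)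

theorem ins_outer : (T1.ins T2).outer = fun i => T1.outer i + T2.outer i := by
  funext i
  simp only [outer, ins, List.length_mergeSort, List.length_append]
  omega

theorem mem_ins_row {i x : ℕ} : x ∈ (T1.ins T2).row i ↔ x ∈ T1.row i ∨ x ∈ T2.row i := by
  simp [ins, List.mem_mergeSort]

theorem ins_row_pairwise (i : ℕ) : ((T1.ins T2).row i).Pairwise (· ≤ ·) :=
  List.pairwise_mergeSort' _ _

theorem shapeLE_ins (x i : ℕ) :
    (T1.ins T2).shapeLE x i = T1.shapeLE x i + T2.shapeLE x i := by
  simp only [shapeLE, ins, ((T1.row i ++ T2.row i).mergeSort_perm _).countP_eq,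
    List.countP_append]
  omega

variable {T1 T2}

theorem IsSSYT.ins (hT1 : T1.IsSSYT) (hT2 : T2.IsSSYT) : (T1.ins T2).IsSSYT := by
  have ⟨hin1, hout1, _, hbd1, _⟩ := hT1
  have ⟨hin2, hout2, _, hbd2, _⟩ := hT2
  have hbd : ∀ i, ∀ x ∈ (T1.ins T2).row i, 1 ≤ x ∧ x ≤ n := fun i x hx =>
    ((mem_ins_row T1 T2).1 hx).elim (hbd1 i x) (hbd2 i x)
  refine ⟨hin1.add hin2, ins_outer T1 T2 ▸ hout1.add hout2, ins_row_pairwise T1 T2, hbd,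
    fun i j h1 h2 h3 h4 => ?_⟩
  refine entry_lt_entry_succ_of_shapeLE_le (ins_row_pairwise T1 T2 _) (ins_row_pairwise T1 T2 _)
    (fun y hy => (hbd _ y hy).1) (fun x => ?_) h1 h2 h3 h4
  rw [shapeLE_ins, shapeLE_ins]
  exact Nat.add_le_add (hT1.shapeLE_succ_le x i) (hT2.shapeLE_succ_le x i)

end Insertion

end SkewTab

theorem insertion_isSSYT_general (n : ℕ) (kappa lam mu nu : ℕ → ℕ)
    (T1 T2 : SkewTab n) (hT1 : T1.IsSSYT) (hT2 : T2.IsSSYT)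
    (h1i : T1.inner = lam) (h1o : T1.outer = kappa)
    (h2i : T2.inner = nu) (h2o : T2.outer = mu) :
    (T1.ins T2).IsSSYT ∧ (T1.ins T2).inner = (fun i => lam i + nu i) ∧
      (T1.ins T2).outer = (fun i => kappa i + mu i) := by
  subst h1i h1o h2i h2o
  exact ⟨hT1.ins hT2, rfl, SkewTab.ins_outer T1 T2⟩

/-- The tableau insertion of an SSYT of shape `κ/λ` and an SSYT of
shape `μ/ν` is an SSYT of shape `(κ+μ)/(λ+ν)`. -/
theorem insertion_isSSYT (n : ℕ) (kappa lam mu nu : ℕ → ℕ)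
    (hk : IsPartition kappa) (hl : IsPartition lam)
    (hm : IsPartition mu) (hn : IsPartition nu)
    (hlk : ∀ i, lam i ≤ kappa i) (hnm : ∀ i, nu i ≤ mu i)
    (T1 T2 : SkewTab n) (hT1 : T1.IsSSYT) (hT2 : T2.IsSSYT)
    (h1i : T1.inner = lam) (h1o : T1.outer = kappa)
    (h2i : T2.inner = nu) (h2o : T2.outer = mu) :
    (T1.ins T2).IsSSYT ∧ (T1.ins T2).inner = (fun i => lam i + nu i) ∧
      (T1.ins T2).outer = (fun i => kappa i + mu i) :=
  insertion_isSSYT_general n kappa lam mu nu T1 T2 hT1 hT2 h1i h1o h2i h2o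
end

section
/- Every semi-standard Young tableau equals the insertion product of its columns: if T is an SSYT with columns C1, C2, ..., Ck (each viewed as a single-column SSYT), then T = C1 ⊠ C2 ⊠ ... ⊠ Ck. -/
open scoped BigOperators

/-! Column `c` of `T` contributes to row `i` a skew box if `c < T.inner i` and otherwise the
entry of `T` in position `(i, c)`, if any. Hence the skew boxes of the columns add up to
`T.inner i`, and concatenating the column rows from left to right gives back `T.row i`;
as that row is already weakly increasing, the sorting done by `⊠` leaves it unchanged. -/

theorem IsPartition.ite_lt {f : ℕ → ℕ} (hf : IsPartition f) (c : ℕ) :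
    IsPartition fun i => if c < f i then 1 else 0 := by
  obtain ⟨hanti, N, hN⟩ := hf
  refine ⟨fun i j hij => ?_, N, fun i hi => if_neg (by simp [hN i hi])⟩
  have := hanti i j hij
  dsimp only
  split_ifs <;> omega

theorem sum_map_range_ite_lt (d m : ℕ) :
    ((List.range m).map fun c => if c < d then 1 else 0).sum = min d m := by
  induction m with
  | zero => simp
  | succ m ih =>
    rw [List.range_succ, List.map_append, List.sum_append, ih]
    simp only [List.map_cons, List.map_nil, List.sum_cons, List.sum_nil]
    split <;> omega

theorem List.flatten_map_range_slice {α : Type*} (l : List α) (d m : ℕ) :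
    ((List.range m).map fun c => if d ≤ c then l[c - d]?.toList else []).flatten =
      l.take (m - d) := by
  induction m with
  | zero => simp
  | succ m ih =>
    rw [List.range_succ, List.map_append, List.flatten_append, ih]
    by_cases hdm : d ≤ m
    · simp [hdm, Nat.sub_add_comm hdm, List.take_add_one]
    · simp [hdm, Nat.sub_eq_zero_of_le (show m + 1 ≤ d by omega),
        Nat.sub_eq_zero_of_le (show m ≤ d by omega)]

namespace SkewTab

variable {n : ℕ}

theorem ext {T U : SkewTab n} (hinner : T.inner = U.inner) (hrow : T.row = U.row) :
    T = U := by
  cases T; cases U; cases hinner; cases hrow; rfl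

theorem inner_le_outer (T : SkewTab n) (i : ℕ) : T.inner i ≤ T.outer i :=
  Nat.le_add_right _ _

theorem col_inner (T : SkewTab n) (c : ℕ) :
    (T.col c).inner = fun i => if c < T.inner i then 1 else 0 := rfl

theorem col_row (T : SkewTab n) (c i : ℕ) :
    (T.col c).row i = if T.inner i ≤ c then (T.row i)[c - T.inner i]?.toList else [] := by
  simp only [col, outer]
  by_cases h1 : T.inner i ≤ c <;> by_cases h2 : c < T.inner i + (T.row i).length
  · simp [h1, h2, List.getElem?_eq_getElem (show c - T.inner i < (T.row i).length by omega)]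
  · simp [h1, h2, List.getElem?_eq_none (show (T.row i).length ≤ c - T.inner i by omega)]
  all_goals simp [h1]

theorem col_outer (T : SkewTab n) (c : ℕ) :
    (T.col c).outer = fun i => if c < T.outer i then 1 else 0 := by
  funext i
  have houter : T.outer i = T.inner i + (T.row i).length := rfl
  show (if c < T.inner i then 1 else 0) + ((T.col c).row i).length = _
  rw [col_row]
  by_cases h1 : c < T.inner i
  · rw [if_pos h1, if_neg (Nat.not_le.mpr h1), if_pos (by omega)]
    rfl
  · rw [if_neg h1, if_pos (Nat.not_lt.mp h1)]
    by_cases h2 : c - T.inner i < (T.row i).length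
    · rw [List.getElem?_eq_getElem h2, if_pos (by omega)]
      rfl
    · rw [List.getElem?_eq_none (Nat.not_lt.mp h2), if_neg (by omega)]
      rfl

theorem col_entry (T : SkewTab n) {c i : ℕ} (hinner : T.inner i ≤ c) (houter : c < T.outer i) :
    (T.col c).entry i 0 = T.entry i c := by
  simp [entry, col, hinner, houter, Nat.not_lt.mpr hinner]

theorem IsSSYT.col {T : SkewTab n} (hT : T.IsSSYT) (c : ℕ) : (T.col c).IsSSYT := by
  obtain ⟨hinner, houter, -, hbound, hstrict⟩ := hT
  refine ⟨T.col_inner c ▸ hinner.ite_lt c, T.col_outer c ▸ houter.ite_lt c,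
    fun i => ?_, fun i x hx => ?_, fun i j h1 h2 h3 h4 => ?_⟩
  · rw [col_row]
    split_ifs
    exacts [Option.pairwise_toList, List.Pairwise.nil]
  · rw [col_row] at hx
    split_ifs at hx
    · exact hbound i x (List.mem_of_getElem? (Option.mem_toList.mp hx))
    · simp at hx
  · have hcell : ∀ r, (T.col c).inner r ≤ j → j < (T.col c).outer r →
        j = 0 ∧ T.inner r ≤ c ∧ c < T.outer r := by
      intro r hr hr'
      simp only [col_inner, col_outer] at hr hr'
      split_ifs at hr hr' <;> omega
    obtain ⟨rfl, hi, hi'⟩ := hcell i h1 h2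
    obtain ⟨-, hj, hj'⟩ := hcell (i + 1) h3 h4
    rw [col_entry T hi hi', col_entry T hj hj']
    exact hstrict i c hi hi' hj hj'

theorem foldr_ins_inner (L : List (SkewTab n)) (i : ℕ) :
    (L.foldr ins empty).inner i = (L.map fun C => C.inner i).sum := by
  induction L with
  | nil => rfl
  | cons C L ih => simp [ins, ih]

theorem foldr_ins_row_perm (L : List (SkewTab n)) (i : ℕ) :
    ((L.foldr ins empty).row i).Perm (L.map fun C => C.row i).flatten := by
  induction L with
  | nil => rfl
  | cons C L ih => exact (List.mergeSort_perm _ _).trans (ih.append_left _)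

theorem foldr_ins_row_pairwise (L : List (SkewTab n)) (i : ℕ) :
    ((L.foldr ins empty).row i).Pairwise (· ≤ ·) := by
  cases L with
  | nil => exact List.Pairwise.nil
  | cons C L => exact List.pairwise_mergeSort' (· ≤ ·) _

variable {m : ℕ}

theorem foldr_ins_cols_inner (T : SkewTab n) (hm : ∀ i, T.outer i ≤ m) :
    (((List.range m).map T.col).foldr ins empty).inner = T.inner := by
  funext i
  rw [foldr_ins_inner, List.map_map]
  simp only [Function.comp_def, col_inner, sum_map_range_ite_lt]
  exact min_eq_left ((T.inner_le_outer i).trans (hm i))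

theorem foldr_ins_cols_row (T : SkewTab n) (hrows : ∀ i, (T.row i).Pairwise (· ≤ ·))
    (hm : ∀ i, T.outer i ≤ m) :
    (((List.range m).map T.col).foldr ins empty).row = T.row := by
  funext i
  have hflatten : (((List.range m).map T.col).map fun C => C.row i).flatten = T.row i := by
    simp only [List.map_map, Function.comp_def, col_row, List.flatten_map_range_slice]
    exact List.take_of_length_le (Nat.le_sub_of_add_le' (hm i))
  exact List.Perm.eq_of_pairwise' (foldr_ins_row_pairwise _ i) (hrows i)
    (hflatten ▸ foldr_ins_row_perm _ i)

end SkewTab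

/-- Every SSYT is the insertion product of its columns: each column is
itself a (single-column) SSYT, and `T = C₁ ⊠ C₂ ⊠ ⋯ ⊠ Cₖ`. -/
theorem eq_insProd_cols (n : ℕ) (T : SkewTab n) (hT : T.IsSSYT)
    (m : ℕ) (hm : ∀ i, T.outer i ≤ m) :
    (∀ c : ℕ, (T.col c).IsSSYT) ∧
      ((List.range m).map T.col).foldr SkewTab.ins SkewTab.empty = T :=
  ⟨hT.col, SkewTab.ext (T.foldr_ins_cols_inner hm) (T.foldr_ins_cols_row hT.2.2.1 hm)⟩
end

section
/- For any two skew shapes κ/λ and μ/ν there exists a non-negative integer r such that μ/ν sits inside (κ + rμ)/(λ + rν); in fact any r > κ_1 works. -/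
open scoped BigOperators

/-!
Send column `j` of `μ/ν` to column `r * j + κ₁` of `(κ + rμ)/(λ + rν)`. In every row `i`
the entries `λ_i ≤ κ_i ≤ κ₁` are smaller than the step `r`, so `r * j + κ₁` lies left of
`λ_i + r ν_i` (resp. `κ_i + r μ_i`) exactly when `j < ν_i` (resp. `j < μ_i`).
-/

theorem mul_add_lt_add_mul_iff {a c r j b : ℕ} (hac : a ≤ c) (hcr : c < r) :
    r * j + c < a + r * b ↔ j < b := by
  constructor
  · intro h
    by_contra! hbj
    have : r * b ≤ r * j := Nat.mul_le_mul_left r hbj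
    omega
  · intro hjb
    have : r * (j + 1) ≤ r * b := Nat.mul_le_mul_left r hjb
    rw [Nat.mul_succ] at this
    omega

theorem SitsInside.of_lt_iff {mu nu alpha beta f : ℕ → ℕ} (hf : Function.Injective f)
    (h_alpha : ∀ j i, f j < alpha i ↔ j < mu i) (h_beta : ∀ j i, f j < beta i ↔ j < nu i) :
    SitsInside mu nu alpha beta := by
  refine ⟨f, hf, fun j i => ⟨?_, (h_beta j i).symm⟩⟩
  simp only [h_alpha, ← not_lt, h_beta]

theorem sitsInside_add_mul {kappa lam mu nu : ℕ → ℕ} {c r : ℕ}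
    (hkc : ∀ i, kappa i ≤ c) (hlc : ∀ i, lam i ≤ c) (hcr : c < r) :
    SitsInside mu nu (fun i => kappa i + r * mu i) (fun i => lam i + r * nu i) := by
  have hr : 0 < r := by omega
  refine SitsInside.of_lt_iff (f := fun j => r * j + c) ?_
    (fun j i => mul_add_lt_add_mul_iff (hkc i) hcr)
    (fun j i => mul_add_lt_add_mul_iff (hlc i) hcr)
  intro a b hab
  exact Nat.eq_of_mul_eq_mul_left hr (Nat.add_right_cancel hab)

theorem exists_sitsInside_general (kappa lam mu nu : ℕ → ℕ)
    (hk : IsPartition kappa)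
    (hlk : ∀ i, lam i ≤ kappa i) :
    (∃ r : ℕ, SitsInside mu nu
        (fun i => kappa i + r * mu i) (fun i => lam i + r * nu i)) ∧
    (∀ r : ℕ, kappa 0 < r → SitsInside mu nu
        (fun i => kappa i + r * mu i) (fun i => lam i + r * nu i)) := by
  have hk0 : ∀ i, kappa i ≤ kappa 0 := fun i => hk.1 0 i i.zero_le
  have large_r : ∀ r : ℕ, kappa 0 < r → SitsInside mu nu
      (fun i => kappa i + r * mu i) (fun i => lam i + r * nu i) :=
    fun r hr => sitsInside_add_mul hk0 (fun i => (hlk i).trans (hk0 i)) hr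
  exact ⟨⟨kappa 0 + 1, large_r _ (Nat.lt_succ_self _)⟩, large_r⟩

/-- For any skew shapes `κ/λ` and `μ/ν` there is `r ≥ 0` such that
`μ/ν` sits inside `(κ+rμ)/(λ+rν)`; in fact any `r > κ₁` works. -/
theorem exists_sitsInside (kappa lam mu nu : ℕ → ℕ)
    (hk : IsPartition kappa) (hl : IsPartition lam)
    (hm : IsPartition mu) (hn : IsPartition nu)
    (hlk : ∀ i, lam i ≤ kappa i) (hnm : ∀ i, nu i ≤ mu i) :
    (∃ r : ℕ, SitsInside mu nu
        (fun i => kappa i + r * mu i) (fun i => lam i + r * nu i)) ∧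
    (∀ r : ℕ, kappa 0 < r → SitsInside mu nu
        (fun i => kappa i + r * mu i) (fun i => lam i + r * nu i)) :=
  exists_sitsInside_general kappa lam mu nu hk hlk
end

section
/- If the skew shape μ/ν sits inside κ/λ, then every SSYT T of shape κ/λ with entries in {1,...,n} factors as T = T' ⊠ T'' where T' is an SSYT of shape μ/ν and T'' is an SSYT of shape (κ−μ)/(λ−ν). -/
open scoped BigOperators

/-!
Restricting an SSYT to any set of columns (keeping, in each row, the entries in the chosen
columns, sorted, and closing up the gaps) gives an SSYT again, whose shape is read off by
counting the chosen columns to the left of `λᵢ` and `κᵢ`. Between rows `i` and `i + 1`, the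
chosen columns in `[λᵢ, κᵢ₊₁)` carry strictly increasing pairs of entries, and there are enough
of them that sorting both rows cannot break the column inequality.

If `f` witnesses that `μ/ν` sits inside `κ/λ`, restrict `T` to the image of `f` and to its
complement. By injectivity of `f` and the column condition, exactly `νᵢ` image columns lie left
of `λᵢ` and `μᵢ` left of `κᵢ`, so the two pieces have shapes `μ/ν` and `(κ−μ)/(λ−ν)`; since they
split every row of `T`, sorting their concatenation gives back `T`.
-/

namespace List

theorem range'_sublist_range' {s m s' m' : ℕ} (hs : s' ≤ s) (hm : s + m ≤ s' + m') :
    range' s m <+ range' s' m' :=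
  sublist_of_subperm_of_pairwise (r := (· < ·))
    (subperm_of_subset nodup_range' fun c hc => by
      rw [mem_range'_1] at hc ⊢; omega)
    (pairwise_lt_range' 1) (pairwise_lt_range' 1)

variable {α : Type*} [LinearOrder α]

theorem Pairwise.lt_countP_iff {l : List α} (hl : l.Pairwise (· ≤ ·)) {p : α → Bool}
    (hp : ∀ x y, x ≤ y → p y → p x) {a : ℕ} (ha : a < l.length) :
    a < l.countP p ↔ p l[a] := by
  induction l generalizing a with
  | nil => simp at ha
  | cons x t ih =>
    rw [pairwise_cons] at hl
    by_cases hx : p x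
    · cases a with
      | zero => simp [hx]
      | succ a => simp [hx, ih hl.2 (by simpa using ha)]
    · have hge : ∀ y ∈ x :: t, ¬ p y := fun y hy hpy => by
        rcases mem_cons.1 hy with rfl | hy
        · exact hx hpy
        · exact hx (hp x y (hl.1 y hy) hpy)
      simp only [countP_eq_zero.2 hge, Nat.not_lt_zero, false_iff]
      exact hge _ (getElem_mem ha)

/-- At most `|B| - b - 1` entries of `B` exceed `v = sort(B)[b]`, so at least `a + 1` pairs
`(u c, w c)` have `w c ≤ v`, which puts `a + 1` entries of `A` below `v`. -/
theorem getElem_mergeSort_lt_of_sublist {ι : Type*} {A B : List α} (cs : List ι)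
    {u w : ι → α} (huw : ∀ c ∈ cs, u c < w c) (hA : cs.map u <+ A) (hB : cs.map w <+ B)
    {a b : ℕ} (ha : a < A.length) (hb : b < B.length) (hcard : B.length + a ≤ cs.length + b) :
    A.mergeSort[a]'(by simpa using ha) < B.mergeSort[b]'(by simpa using hb) := by
  set v := B.mergeSort[b]'(by simpa using hb)
  have hB_le : b < B.countP (· ≤ v) := by
    rw [← (mergeSort_perm B _).countP_eq]
    exact ((pairwise_mergeSort' (· ≤ ·) B).lt_countP_iff
      (fun x y hxy hy => by simpa using le_trans hxy (by simpa using hy))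
      (a := b) (by simpa using hb)).2 (by simp [v])
  have hB_split : B.length = B.countP (· ≤ v) + B.countP (v < ·) := by
    simpa using length_eq_countP_add_countP (· ≤ v) (l := B)
  have hcs_split : cs.length = cs.countP (fun c => w c ≤ v) + cs.countP (fun c => v < w c) := by
    simpa using length_eq_countP_add_countP (fun c => w c ≤ v) (l := cs)
  have hcs_gt : cs.countP (fun c => v < w c) ≤ B.countP (v < ·) := by
    simpa [countP_map, Function.comp_def] using hB.countP_le (p := (v < ·))
  have hcs_lt : cs.countP (fun c => w c ≤ v) ≤ cs.countP (fun c => u c < v) :=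
    countP_mono_left fun c hc h => by simpa using lt_of_lt_of_le (huw c hc) (by simpa using h)
  have hA_lt : cs.countP (fun c => u c < v) ≤ A.countP (· < v) := by
    simpa [countP_map, Function.comp_def] using hA.countP_le (p := (· < v))
  have : a < A.mergeSort.countP (· < v) := by
    rw [(mergeSort_perm A _).countP_eq]; omega
  simpa using ((pairwise_mergeSort' (· ≤ ·) A).lt_countP_iff
    (fun x y hxy hy => by simpa using lt_of_le_of_lt hxy (by simpa using hy))
    (by simpa using ha)).1 this

end List

def colCount (p : ℕ → Bool) (x : ℕ) : ℕ := (List.range x).countP p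

theorem colCount_add (p : ℕ → Bool) (x m : ℕ) :
    colCount p (x + m) = colCount p x + (List.range' x m).countP p := by
  have hsplit := List.range'_append (s := 0) (m := x) (n := m) (step := 1)
  simp only [Nat.zero_add, Nat.one_mul] at hsplit
  simp only [colCount, List.range_eq_range', ← hsplit, List.countP_append]

theorem colCount_mono (p : ℕ → Bool) : Monotone (colCount p) := fun x y hxy => by
  obtain ⟨m, rfl⟩ := Nat.exists_eq_add_of_le hxy
  rw [colCount_add]; omega

theorem colCount_add_colCount_not (p : ℕ → Bool) (x : ℕ) :
    colCount p x + colCount (fun c => !p c) x = x := by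
  simpa [colCount] using (List.length_eq_countP_add_countP p (l := List.range x)).symm

theorem colCount_eq_of_injective {f : ℕ → ℕ} (hf : Function.Injective f) {p : ℕ → Bool}
    (hp : ∀ c, p c ↔ c ∈ Set.range f) {x m : ℕ} (h : ∀ j, f j < x ↔ j < m) :
    colCount p x = m := by
  have hperm : ((List.range x).filter p).Perm ((List.range m).map f) := by
    refine (List.perm_ext_iff_of_nodup (List.nodup_range.filter _)
      (List.nodup_range.map hf)).2 fun c => ?_
    simp only [List.mem_filter, List.mem_range, hp, Set.mem_range, List.mem_map]
    constructor
    · rintro ⟨hc, j, rfl⟩; exact ⟨j, (h j).1 hc, rfl⟩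
    · rintro ⟨j, hj, rfl⟩; exact ⟨(h j).2 hj, j, rfl⟩
  simpa [colCount, List.countP_eq_length_filter] using hperm.length_eq

theorem IsPartition.comp_monotone {f g : ℕ → ℕ} (hf : IsPartition f) (hg : Monotone g)
    (hg0 : g 0 = 0) : IsPartition (fun i => g (f i)) := by
  obtain ⟨hanti, N, hN⟩ := hf
  exact ⟨fun i j hij => hg (hanti i j hij), N, fun i hi => show g (f i) = 0 by rw [hN i hi, hg0]⟩

namespace SkewTab

variable {n : ℕ}

def cells (T : SkewTab n) (i : ℕ) : List ℕ := List.range' (T.inner i) (T.row i).length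

theorem map_entry_cells (T : SkewTab n) (i : ℕ) : (T.cells i).map (T.entry i) = T.row i := by
  refine List.ext_getElem (by simp [cells]) fun k h₁ h₂ => ?_
  simp [cells, entry, List.getElem?_eq_getElem h₂]

theorem length_map_filter_cells (p : ℕ → Bool) (T : SkewTab n) (i : ℕ) :
    (((T.cells i).filter p).map (T.entry i)).length =
      colCount p (T.outer i) - colCount p (T.inner i) := by
  rw [List.length_map, ← List.countP_eq_length_filter, cells, outer, colCount_add]
  omega

def restrictCols (T : SkewTab n) (p : ℕ → Bool) : SkewTab n where
  inner i := colCount p (T.inner i)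
  row i := (((T.cells i).filter p).map (T.entry i)).mergeSort

theorem outer_restrictCols (T : SkewTab n) (p : ℕ → Bool) (i : ℕ) :
    (T.restrictCols p).outer i = colCount p (T.outer i) := by
  have := colCount_mono p (Nat.le_add_right (T.inner i) (T.row i).length)
  simp only [outer, restrictCols, List.length_mergeSort, length_map_filter_cells] at this ⊢
  omega

theorem restrictCols_ins_restrictCols_not (T : SkewTab n) (p : ℕ → Bool)
    (hT : ∀ i, (T.row i).Pairwise (· ≤ ·)) :
    (T.restrictCols p).ins (T.restrictCols fun c => !p c) = T := by
  have hrow : ∀ i, ((T.restrictCols p).row i ++ (T.restrictCols fun c => !p c).row i).Perm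
      (T.row i) := fun i => by
    refine ((List.mergeSort_perm _ _).append (List.mergeSort_perm _ _)).trans ?_
    rw [← List.map_append, ← map_entry_cells]
    exact (List.filter_append_perm p _).map _
  cases T with
  | mk inner row =>
    simp only [ins, SkewTab.mk.injEq]
    refine ⟨funext fun i => colCount_add_colCount_not p _, funext fun i => ?_⟩
    exact ((List.mergeSort_perm _ _).trans (hrow i)).eq_of_pairwise'
      (List.pairwise_mergeSort' (· ≤ ·) _) (hT i)

theorem IsSSYT.restrictCols_entry_lt {T : SkewTab n} (hT : T.IsSSYT) (p : ℕ → Bool) {i j : ℕ}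
    (hj₁ : (T.restrictCols p).inner i ≤ j) (hj₂ : j < (T.restrictCols p).outer i)
    (hj₃ : (T.restrictCols p).inner (i + 1) ≤ j) (hj₄ : j < (T.restrictCols p).outer (i + 1)) :
    (T.restrictCols p).entry i j < (T.restrictCols p).entry (i + 1) j := by
  obtain ⟨hin, hout, -, -, hcol⟩ := hT
  rw [outer_restrictCols] at hj₂ hj₄
  simp only [restrictCols] at hj₁ hj₃
  have hrow_len : T.outer i = T.inner i + (T.row i).length := rfl
  have hrow_len_succ : T.outer (i + 1) = T.inner (i + 1) + (T.row (i + 1)).length := rfl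
  have hin_succ := hin.1 i (i + 1) i.le_succ
  have hout_succ := hout.1 i (i + 1) i.le_succ
  have hshared : T.inner i ≤ T.outer (i + 1) := by
    by_contra! h
    have := colCount_mono p h.le
    omega
  have hA_len := length_map_filter_cells p T i
  have hB_len := length_map_filter_cells p T (i + 1)
  have hshared_len := colCount_add p (T.inner i) (T.outer (i + 1) - T.inner i)
  rw [Nat.add_sub_cancel' hshared, List.countP_eq_length_filter] at hshared_len
  simp only [entry, restrictCols]
  rw [List.getD_eq_getElem _ _ (by rw [List.length_mergeSort]; omega),
    List.getD_eq_getElem _ _ (by rw [List.length_mergeSort]; omega)]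
  refine List.getElem_mergeSort_lt_of_sublist
    ((List.range' (T.inner i) (T.outer (i + 1) - T.inner i)).filter p)
    (u := T.entry i) (w := T.entry (i + 1)) (fun c hc => ?_) ?_ ?_
    (by omega) (by omega) (by omega)
  · rw [List.mem_filter, List.mem_range'_1] at hc
    exact hcol i c hc.1.1 (by omega) (by omega) (by omega)
  · refine ((List.Sublist.filter p ?_)).map _
    exact List.range'_sublist_right.2 (by omega)
  · refine ((List.Sublist.filter p ?_)).map _
    exact List.range'_sublist_range' hin_succ (by omega)

theorem IsSSYT.restrictCols {T : SkewTab n} (hT : T.IsSSYT) (p : ℕ → Bool) :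
    (T.restrictCols p).IsSSYT := by
  have houter : (T.restrictCols p).outer = fun i => colCount p (T.outer i) :=
    funext (outer_restrictCols T p)
  refine ⟨hT.1.comp_monotone (colCount_mono p) rfl, houter ▸ hT.2.1.comp_monotone
    (colCount_mono p) rfl, fun i => List.pairwise_mergeSort' (· ≤ ·) _, fun i x hx => ?_,
    fun i j => hT.restrictCols_entry_lt p⟩
  refine hT.2.2.2.1 i x ?_
  rw [← map_entry_cells]
  exact ((List.filter_sublist.map _).subset (List.mem_mergeSort.1 hx))

end SkewTab

theorem decompose_of_sitsInside_general (n : ℕ) (kappa lam mu nu : ℕ → ℕ)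
    (hlk : ∀ i, lam i ≤ kappa i) (hnm : ∀ i, nu i ≤ mu i)
    (hsit : SitsInside mu nu kappa lam)
    (T : SkewTab n) (hT : T.IsSSYT) (hTi : T.inner = lam) (hTo : T.outer = kappa) :
    ∃ T' T'' : SkewTab n,
      T'.IsSSYT ∧ T'.inner = nu ∧ T'.outer = mu ∧
      T''.IsSSYT ∧ T''.inner = (fun i => lam i - nu i) ∧
      T''.outer = (fun i => kappa i - mu i) ∧
      T = T'.ins T'' := by
  classical
  obtain ⟨f, hf, hcol⟩ := hsit
  set p : ℕ → Bool := fun c => decide (c ∈ Set.range f)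
  have hp : ∀ c, p c ↔ c ∈ Set.range f := fun c => decide_eq_true_iff
  have hinner : ∀ i, colCount p (lam i) = nu i := fun i =>
    colCount_eq_of_injective hf hp fun j => (hcol j i).2.symm
  have houter : ∀ i, colCount p (kappa i) = mu i := fun i =>
    colCount_eq_of_injective hf hp fun j => by
      obtain ⟨hcell, hskew⟩ := hcol j i
      rcases lt_or_ge j (nu i) with hj | hj
      · exact iff_of_true ((hskew.1 hj).trans_le (hlk i)) (hj.trans_le (hnm i))
      · have hfj : lam i ≤ f j := not_lt.1 (mt hskew.2 (not_lt.2 hj))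
        simpa [hj, hfj] using hcell.symm
  refine ⟨T.restrictCols p, T.restrictCols fun c => !p c, hT.restrictCols p, ?_, ?_,
    hT.restrictCols _, ?_, ?_, (T.restrictCols_ins_restrictCols_not p hT.2.2.1).symm⟩
  · exact funext fun i => show colCount p (T.inner i) = nu i by rw [hTi, hinner]
  · exact funext fun i => by rw [SkewTab.outer_restrictCols, hTo, houter]
  · funext i
    have := colCount_add_colCount_not p (lam i)
    rw [hinner] at this
    show colCount _ (T.inner i) = _
    rw [hTi]; omega
  · funext i
    have := colCount_add_colCount_not p (kappa i)
    rw [houter] at this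
    rw [SkewTab.outer_restrictCols, hTo]; omega

/-- If `μ/ν` sits inside `κ/λ` then every SSYT `T` of shape `κ/λ`
factors as `T = T' ⊠ T''` with `T'` an SSYT of shape `μ/ν` and `T''` an SSYT of shape
`(κ−μ)/(λ−ν)`. -/
theorem decompose_of_sitsInside (n : ℕ) (kappa lam mu nu : ℕ → ℕ)
    (hk : IsPartition kappa) (hl : IsPartition lam)
    (hm : IsPartition mu) (hn : IsPartition nu)
    (hlk : ∀ i, lam i ≤ kappa i) (hnm : ∀ i, nu i ≤ mu i)
    (hsit : SitsInside mu nu kappa lam)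
    (T : SkewTab n) (hT : T.IsSSYT) (hTi : T.inner = lam) (hTo : T.outer = kappa) :
    ∃ T' T'' : SkewTab n,
      T'.IsSSYT ∧ T'.inner = nu ∧ T'.outer = mu ∧
      T''.IsSSYT ∧ T''.inner = (fun i => lam i - nu i) ∧
      T''.outer = (fun i => kappa i - mu i) ∧
      T = T'.ins T'' :=
  decompose_of_sitsInside_general n kappa lam mu nu hlk hnm hsit T hT hTi hTo
end

section
/- For partitions μ ⊇ ν of length at most n, the sequence of skew Schur polynomials s_{kμ/kν}(x1,...,xn), k = 0, 1, 2, ..., satisfies the linear recurrence with characteristic polynomial χ(t) = ∏_{T ∈ T^n_{μ/ν}} (t − x^{w(T)}), the product over all SSYTs of shape μ/ν with entries in {1,...,n}. -/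
open scoped BigOperators

/-!
Cut an SSYT of shape `(m+1)μ/(m+1)ν` into its `m + 1` layers, layer `t` consisting of the
columns `≡ t (mod m + 1)`. The layers are SSYTs `T₀ ≤ ⋯ ≤ Tₘ` of shape `μ/ν` (entrywise
order), and the only further condition is that `Tₘ` may stand to the left of `T₀`, i.e.
`L Tₘ ≤ T₀`, where `L G` is the least SSYT that `G` may stand to the left of. Hence
`s_{kμ/kν} = Σ_G (Nᵏ)(L G, G)` for the transfer matrix `N_{F,G} = [F ≤ G] x^{w(G)}`; for
`k = 0` both sides are `1` because the minimal tableau is the only fixed point of `L`. Since `N`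
is triangular for the entrywise order, its characteristic polynomial is `χ`, and
Cayley–Hamilton gives the recurrence.
-/

open Finset Polynomial

namespace Matrix

variable {ι R : Type*} [Fintype ι] [DecidableEq ι]

theorem charpoly_eq_prod_of_apply_eq_zero_of_not_le [PartialOrder ι] [CommRing R]
    (M : Matrix ι ι R) (hM : ∀ i j, ¬ i ≤ j → M i j = 0) :
    M.charpoly = ∏ i, (X - C (M i i)) := by
  let _ : Fintype (LinearExtension ι) := inferInstanceAs (Fintype ι)
  let e : ι ≃ LinearExtension ι := Equiv.refl ι
  have hup : (reindex e e M).IsUpperTriangular := fun i j hji =>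
    hM _ _ fun hij => (toLinearExtension.monotone hij).not_gt hji
  rw [← charpoly_reindex e M, charpoly_of_isUpperTriangular _ hup]
  rfl

theorem sum_coeff_mul_pow_add_apply [CommSemiring R] (A : Matrix ι ι R) (p : R[X]) (k : ℕ)
    (a b : ι) :
    ∑ i ∈ range (p.natDegree + 1), p.coeff i * (A ^ (k + i)) a b = (A ^ k * aeval A p) a b := by
  rw [aeval_eq_sum_range, mul_sum, sum_apply]
  refine sum_congr rfl fun i _ => ?_
  rw [mul_smul_comm, ← pow_add, smul_apply, smul_eq_mul]

end Matrix

namespace Nat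

theorem mul_add_div_mod_of_lt {K q t : ℕ} (ht : t < K) :
    (K * q + t) / K = q ∧ (K * q + t) % K = t :=
  ⟨by rw [Nat.mul_add_div (by omega), Nat.div_eq_of_lt ht, add_zero],
    by rw [Nat.mul_add_mod, Nat.mod_eq_of_lt ht]⟩

theorem exists_eq_mul_add {K : ℕ} (hK : 0 < K) (j : ℕ) : ∃ q t, t < K ∧ j = K * q + t :=
  ⟨j / K, j % K, Nat.mod_lt _ hK, (Nat.div_add_mod j K).symm⟩

end Nat

namespace Finset

variable {M : Type*} [CommMonoid M]

theorem prod_range_mul (f : ℕ → M) (K b : ℕ) :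
    ∏ j ∈ range (K * b), f j = ∏ q ∈ range b, ∏ t ∈ range K, f (K * q + t) := by
  induction b with
  | zero => simp
  | succ b ih => rw [Nat.mul_succ, prod_range_add, ih, prod_range_succ]

theorem prod_Ico_mul (f : ℕ → M) (K a b : ℕ) :
    ∏ j ∈ Ico (K * a) (K * b), f j = ∏ q ∈ Ico a b, ∏ t ∈ range K, f (K * q + t) := by
  rw [prod_Ico_eq_prod_range, ← Nat.mul_sub, prod_range_mul, prod_Ico_eq_prod_range]
  simp only [mul_add, add_assoc]

end Finset

theorem finsum_mem_setOf_eq_sum_ite {ι M : Type*} [Fintype ι] [AddCommMonoid M]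
    (p : ι → Prop) [DecidablePred p] (f : ι → M) :
    ∑ᶠ i ∈ {i | p i}, f i = ∑ i, if p i then f i else 0 := by
  rw [finsum_mem_def, finsum_eq_sum_of_fintype]
  exact sum_congr rfl fun i _ => Set.indicator_apply _ _ _

namespace List

variable {α : Type*}

theorem getD_map_range (f : ℕ → α) (d : α) (L t : ℕ) :
    ((range L).map f).getD t d = if t < L then f t else d := by
  split_ifs with ht
  · simp [ht]
  · exact getD_eq_default _ _ (by simpa using not_lt.mp ht)

theorem count_eq_sum_range_getD [DecidableEq α] (v d : α) (l : List α) :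
    l.count v = ∑ t ∈ Finset.range l.length, if l.getD t d = v then 1 else 0 := by
  induction l with
  | nil => simp
  | cons x l ih =>
    rw [length_cons, Finset.sum_range_succ', count_cons, ih]
    by_cases hx : x = v <;> simp [hx]

end List

namespace StretchedSchur

/-- Tableaux are handled as entry functions `e i j` (row `i`, column `j`, both from `0`) that
vanish off the diagram, so that cutting columns into layers is arithmetic on `j`. -/
def cell (a b : ℕ → ℕ) (i j : ℕ) : Prop := b i ≤ j ∧ j < a i

instance (a b : ℕ → ℕ) (i j : ℕ) : Decidable (cell a b i j) :=
  inferInstanceAs (Decidable (_ ∧ _))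

structure IsSkewShape (n : ℕ) (a b : ℕ → ℕ) : Prop where
  outer : IsPartition a
  inner : IsPartition b
  inner_le : ∀ i, b i ≤ a i
  outer_eq_zero : ∀ i, n ≤ i → a i = 0

structure IsSSYTFun (n : ℕ) (a b : ℕ → ℕ) (e : ℕ → ℕ → ℕ) : Prop where
  one_le : ∀ i j, cell a b i j → 1 ≤ e i j
  le_n : ∀ i j, cell a b i j → e i j ≤ n
  row_le : ∀ i j, cell a b i j → cell a b i (j + 1) → e i j ≤ e i (j + 1)
  col_lt : ∀ i j, cell a b i j → cell a b (i + 1) j → e i j < e (i + 1) j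
  eq_zero : ∀ i j, ¬ cell a b i j → e i j = 0

abbrev Tab (n : ℕ) (a b : ℕ → ℕ) := {e : ℕ → ℕ → ℕ // IsSSYTFun n a b e}

/-- `x_v` for an entry `v ∈ {1,…,n}`; the variables are indexed from `0`. -/
noncomputable def entryVar (n v : ℕ) : MvPolynomial (Fin n) ℤ :=
  if h : v - 1 < n then MvPolynomial.X ⟨v - 1, h⟩ else 1

noncomputable def cellMonomial (n : ℕ) (a b : ℕ → ℕ) (e : ℕ → ℕ → ℕ) :
    MvPolynomial (Fin n) ℤ :=
  ∏ i ∈ range n, ∏ j ∈ Ico (b i) (a i), entryVar n (e i j)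

variable {n : ℕ} {a b : ℕ → ℕ}

lemma cell_of_col_between {i j j' j'' : ℕ} (hj : cell a b i j) (hj' : cell a b i j')
    (h1 : j ≤ j'') (h2 : j'' ≤ j') : cell a b i j'' :=
  ⟨hj.1.trans h1, h2.trans_lt hj'.2⟩

namespace IsSkewShape

lemma row_lt_of_cell (h : IsSkewShape n a b) {i j : ℕ} (hc : cell a b i j) : i < n := by
  by_contra hi
  have := h.outer_eq_zero i (not_lt.mp hi)
  have := hc.2
  omega

lemma col_lt_of_cell (h : IsSkewShape n a b) {i j : ℕ} (hc : cell a b i j) : j < a 0 :=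
  hc.2.trans_le (h.outer.1 0 i i.zero_le)

lemma cell_of_row_between (h : IsSkewShape n a b) {r i i' j : ℕ} (hr : cell a b r j)
    (hi : cell a b i j) (h1 : r ≤ i') (h2 : i' ≤ i) : cell a b i' j :=
  ⟨(h.inner.1 r i' h1).trans hr.1, hi.2.trans_le (h.outer.1 i' i h2)⟩

lemma finite_tab (h : IsSkewShape n a b) : Finite (Tab n a b) := by
  let f : Tab n a b → Fin n × Fin (a 0) → Fin (n + 1) := fun e p =>
    ⟨min (e.1 p.1 p.2) n, by omega⟩
  refine Finite.of_injective f fun e e' hee' => Subtype.ext (funext₂ fun i j => ?_)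
  by_cases hc : cell a b i j
  · have hij := congrFun hee' (⟨i, h.row_lt_of_cell hc⟩, ⟨j, h.col_lt_of_cell hc⟩)
    simp only [f, Fin.mk.injEq] at hij
    have := e.2.le_n i j hc
    have := e'.2.le_n i j hc
    omega
  · rw [e.2.eq_zero i j hc, e'.2.eq_zero i j hc]

lemma mul (h : IsSkewShape n a b) (K : ℕ) :
    IsSkewShape n (fun j => K * a j) (fun j => K * b j) := by
  obtain ⟨⟨ha, N, hN⟩, ⟨hb, N', hN'⟩, hle, hzero⟩ := h
  exact ⟨⟨fun i j hij => Nat.mul_le_mul_left K (ha i j hij), N, by simp +contextual [hN]⟩,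
    ⟨fun i j hij => Nat.mul_le_mul_left K (hb i j hij), N', by simp +contextual [hN']⟩,
    fun i => Nat.mul_le_mul_left K (hle i), fun i hi => by simp [hzero i hi]⟩

end IsSkewShape

namespace IsSSYTFun

variable {e : ℕ → ℕ → ℕ}

lemma row_mono (he : IsSSYTFun n a b e) {i j j' : ℕ} (hj : cell a b i j)
    (hj' : cell a b i j') (hle : j ≤ j') : e i j ≤ e i j' := by
  induction j', hle using Nat.le_induction with
  | base => rfl
  | succ j' hle ih =>
    have hc := cell_of_col_between hj hj' hle j'.le_succ
    exact (ih hc).trans (he.row_le i j' hc hj')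

lemma add_le_of_col (he : IsSSYTFun n a b e) (hs : IsSkewShape n a b) {r i j : ℕ}
    (hr : cell a b r j) (hi : cell a b i j) (hle : r ≤ i) : e r j + (i - r) ≤ e i j := by
  induction i, hle using Nat.le_induction with
  | base => simp
  | succ i hle ih =>
    have hc := hs.cell_of_row_between hr hi hle i.le_succ
    have := he.col_lt i j hc hi
    have := ih hc
    omega

end IsSSYTFun

section EntryFun

def entryFun (a b : ℕ → ℕ) (T : SkewTab n) : ℕ → ℕ → ℕ :=
  fun i j => if cell a b i j then T.entry i j else 0

def ofEntryFun (n : ℕ) (a b : ℕ → ℕ) (e : ℕ → ℕ → ℕ) : SkewTab n :=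
  ⟨b, fun i => (List.range (a i - b i)).map fun t => e i (b i + t)⟩

lemma length_row_of_mem_Tabs {T : SkewTab n} (hT : T ∈ Tabs n a b) (i : ℕ) :
    (T.row i).length = a i - b i := by
  have h1 : T.inner i + (T.row i).length = a i := congrFun hT.2.2 i
  have h2 : T.inner i = b i := congrFun hT.2.1 i
  omega

lemma entryFun_apply_of_mem_Tabs {T : SkewTab n} (hT : T ∈ Tabs n a b) {i t : ℕ}
    (ht : t < a i - b i) :
    entryFun a b T i (b i + t) = (T.row i)[t]'(by rwa [length_row_of_mem_Tabs hT]) := by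
  rw [entryFun, if_pos ⟨by omega, by omega⟩, SkewTab.entry, hT.2.1, Nat.add_sub_cancel_left,
    List.getD_eq_getElem]

lemma isSSYTFun_entryFun {T : SkewTab n} (hT : T ∈ Tabs n a b) :
    IsSSYTFun n a b (entryFun a b T) := by
  have ⟨⟨_, _, hrow, hbound, hcol⟩, hin, hout⟩ := hT
  have hmem : ∀ i j, cell a b i j → entryFun a b T i j ∈ T.row i := fun i j hc => by
    obtain ⟨t, rfl⟩ := Nat.exists_eq_add_of_le hc.1
    rw [entryFun_apply_of_mem_Tabs hT (by have := hc.2; omega)]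
    exact List.getElem_mem _
  refine ⟨fun i j hc => (hbound i _ (hmem i j hc)).1, fun i j hc => (hbound i _ (hmem i j hc)).2,
    fun i j hc hc' => ?_, fun i j hc hc' => ?_, fun i j hc => if_neg hc⟩
  · obtain ⟨t, rfl⟩ := Nat.exists_eq_add_of_le hc.1
    have := hc'.2
    rw [add_assoc, entryFun_apply_of_mem_Tabs hT (by omega),
      entryFun_apply_of_mem_Tabs hT (by omega)]
    exact (hrow i).rel_get_of_le (a := ⟨t, _⟩) (b := ⟨t + 1, _⟩) (by simp)
  · simp only [entryFun, if_pos hc, if_pos hc']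
    exact hcol i j (hin ▸ hc.1) (hout ▸ hc.2) (hin ▸ hc'.1) (hout ▸ hc'.2)

lemma ofEntryFun_entry (e : ℕ → ℕ → ℕ) {i j : ℕ} (hc : cell a b i j) :
    (ofEntryFun n a b e).entry i j = e i j := by
  have := hc.1
  have := hc.2
  rw [SkewTab.entry, ofEntryFun, List.getD_map_range, if_pos (by dsimp only; omega)]
  congr 1
  dsimp only
  omega

lemma ofEntryFun_mem_Tabs (h : IsSkewShape n a b) {e : ℕ → ℕ → ℕ}
    (he : IsSSYTFun n a b e) : ofEntryFun n a b e ∈ Tabs n a b := by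
  have hout : (ofEntryFun n a b e).outer = a := funext fun i => by
    have := h.inner_le i
    simp only [SkewTab.outer, ofEntryFun, List.length_map, List.length_range]
    omega
  refine ⟨⟨h.inner, by rw [hout]; exact h.outer, fun i => ?_, fun i x hx => ?_,
    fun i j h1 h2 h3 h4 => ?_⟩, rfl, hout⟩
  · refine List.pairwise_iff_getElem.mpr fun t t' _ ht' htt' => ?_
    simp only [ofEntryFun, List.length_map, List.length_range] at ht'
    simp only [ofEntryFun, List.getElem_map, List.getElem_range]
    exact he.row_mono ⟨le_self_add, by omega⟩ ⟨le_self_add, by omega⟩ (by omega)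
  · simp only [ofEntryFun, List.mem_map, List.mem_range] at hx
    obtain ⟨t, ht, rfl⟩ := hx
    exact ⟨he.one_le i _ ⟨by omega, by omega⟩, he.le_n i _ ⟨by omega, by omega⟩⟩
  · rw [hout] at h2 h4
    change b i ≤ j at h1
    change b (i + 1) ≤ j at h3
    rw [ofEntryFun_entry e ⟨h1, h2⟩, ofEntryFun_entry e ⟨h3, h4⟩]
    exact he.col_lt i j ⟨h1, h2⟩ ⟨h3, h4⟩

lemma invOn_ofEntryFun_entryFun (h : IsSkewShape n a b) :
    Set.InvOn (ofEntryFun n a b) (entryFun a b) (Tabs n a b) {e | IsSSYTFun n a b e} := by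
  refine ⟨fun T hT => ?_, fun e he => funext₂ fun i j => ?_⟩
  · obtain ⟨inner, row⟩ := T
    obtain rfl : inner = b := hT.2.1
    simp only [ofEntryFun, SkewTab.mk.injEq, true_and]
    refine funext fun i => List.ext_getElem (by simp [length_row_of_mem_Tabs hT]) ?_
    intro t ht _
    simp only [List.getElem_map, List.getElem_range]
    exact entryFun_apply_of_mem_Tabs hT (by simpa using ht)
  · by_cases hc : cell a b i j
    · rw [entryFun, if_pos hc, ofEntryFun_entry e hc]
    · rw [entryFun, if_neg hc, (he : IsSSYTFun n a b e).eq_zero i j hc]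

lemma bijOn_entryFun (h : IsSkewShape n a b) :
    Set.BijOn (entryFun a b) (Tabs n a b) {e | IsSSYTFun n a b e} :=
  (invOn_ofEntryFun_entryFun h).bijOn (fun _ hT => isSSYTFun_entryFun hT)
    (fun _ he => ofEntryFun_mem_Tabs h he)

lemma wt_eq_sum_cells (h : IsSkewShape n a b) {T : SkewTab n} (hT : T ∈ Tabs n a b) (v : ℕ) :
    T.wt v =
      ∑ i ∈ range n, ∑ j ∈ Ico (b i) (a i), if entryFun a b T i j = v then 1 else 0 := by
  rw [SkewTab.wt, finsum_eq_sum_of_support_subset _ (s := range n) fun i hi => ?_]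
  · refine sum_congr rfl fun i _ => ?_
    rw [List.count_eq_sum_range_getD v 0, length_row_of_mem_Tabs hT, sum_Ico_eq_sum_range]
    refine sum_congr rfl fun t ht => ?_
    rw [entryFun_apply_of_mem_Tabs hT (mem_range.mp ht), List.getD_eq_getElem]
  · by_contra hi'
    have hrow : (T.row i).length = 0 := by
      rw [length_row_of_mem_Tabs hT, h.outer_eq_zero i (by simpa using hi')]
      exact Nat.zero_sub _
    simp [List.length_eq_zero_iff.mp hrow] at hi

lemma prod_X_pow_ite_eq_entryVar {v : ℕ} (h1 : 1 ≤ v) (h2 : v ≤ n) :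
    ∏ k : Fin n, MvPolynomial.X (R := ℤ) k ^ (if v = (k : ℕ) + 1 then 1 else 0) =
      entryVar n v := by
  rw [entryVar, dif_pos (by omega), prod_eq_single (⟨v - 1, by omega⟩ : Fin n)]
  · rw [if_pos (by simp; omega), pow_one]
  · intro k _ hk
    rw [if_neg fun hv => hk (Fin.ext (by simp only; omega)), pow_zero]
  · simp

lemma xwt_eq_cellMonomial (h : IsSkewShape n a b) {T : SkewTab n} (hT : T ∈ Tabs n a b) :
    xwt T = cellMonomial n a b (entryFun a b T) := by
  have he := isSSYTFun_entryFun hT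
  calc xwt T = ∏ k : Fin n, MvPolynomial.X k ^ T.wt ((k : ℕ) + 1) := rfl
    _ = ∏ k : Fin n, ∏ i ∈ range n, ∏ j ∈ Ico (b i) (a i),
          MvPolynomial.X (R := ℤ) k ^ (if entryFun a b T i j = (k : ℕ) + 1 then 1 else 0) := by
        refine prod_congr rfl fun k _ => ?_
        simp only [wt_eq_sum_cells h hT, ← prod_pow_eq_pow_sum]
    _ = ∏ i ∈ range n, ∏ j ∈ Ico (b i) (a i), ∏ k : Fin n,
          MvPolynomial.X (R := ℤ) k ^ (if entryFun a b T i j = (k : ℕ) + 1 then 1 else 0) := by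
        rw [prod_comm]
        exact prod_congr rfl fun i _ => prod_comm
    _ = cellMonomial n a b (entryFun a b T) := by
        refine prod_congr rfl fun i _ => prod_congr rfl fun j hj => ?_
        have hc : cell a b i j := mem_Ico.mp hj
        exact prod_X_pow_ite_eq_entryVar (he.one_le i j hc) (he.le_n i j hc)

lemma schur_eq_finsum (h : IsSkewShape n a b) :
    schur n a b = ∑ᶠ e ∈ {e | IsSSYTFun n a b e}, cellMonomial n a b e :=
  finsum_mem_eq_of_bijOn _ (bijOn_entryFun h) fun _ hT => xwt_eq_cellMonomial h hT

lemma charPoly_eq_finprod (h : IsSkewShape n a b) :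
    charPoly n a b =
      ∏ᶠ e ∈ {e | IsSSYTFun n a b e}, (X - C (cellMonomial n a b e)) :=
  finprod_mem_eq_of_bijOn _ (bijOn_entryFun h) fun _ hT => by rw [xwt_eq_cellMonomial h hT]

end EntryFun

open scoped Classical

section Transfer

variable (n) (μ ν : ℕ → ℕ)

noncomputable def transferMatrix : Matrix (Tab n μ ν) (Tab n μ ν) (MvPolynomial (Fin n) ℤ) :=
  Matrix.of fun F G => if F ≤ G then cellMonomial n μ ν G.1 else 0

variable {n μ ν} [Fintype (Tab n μ ν)]

lemma charpoly_transferMatrix :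
    (transferMatrix n μ ν).charpoly =
      ∏ G : Tab n μ ν, (X - C (cellMonomial n μ ν G.1)) := by
  rw [Matrix.charpoly_eq_prod_of_apply_eq_zero_of_not_le (transferMatrix n μ ν)
    fun F G hFG => if_neg hFG]
  simp [transferMatrix]

lemma charPoly_eq_charpoly (h : IsSkewShape n μ ν) :
    charPoly n μ ν = (transferMatrix n μ ν).charpoly := by
  rw [charpoly_transferMatrix, charPoly_eq_finprod h, ← finprod_eq_prod_of_fintype]
  exact (finprod_set_coe_eq_finprod_mem {e | IsSSYTFun n μ ν e}).symm

lemma transferMatrix_pow_succ_apply (m : ℕ) (F G : Tab n μ ν) :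
    (transferMatrix n μ ν ^ (m + 1)) F G =
      ∑ c : Fin (m + 1) → Tab n μ ν,
        if Monotone c ∧ F ≤ c 0 ∧ c (Fin.last m) = G then ∏ t, cellMonomial n μ ν (c t).1
        else 0 := by
  induction m generalizing F with
  | zero =>
    rw [pow_one, ← (Equiv.funUnique (Fin 1) (Tab n μ ν)).symm.sum_comp]
    simp [transferMatrix, Subsingleton.monotone, and_comm (a := F ≤ _), ite_and]
  | succ m ih =>
    rw [pow_succ', Matrix.mul_apply, ← (Fin.consEquiv fun _ => Tab n μ ν).sum_comp,
      Fintype.sum_prod_type]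
    refine sum_congr rfl fun H _ => ?_
    rw [ih, mul_sum]
    refine sum_congr rfl fun c _ => ?_
    have hmono :
        Monotone (Fin.cons H c : Fin (m + 2) → Tab n μ ν) ↔ H ≤ c 0 ∧ Monotone c :=
      monotone_vecCons
    simp only [transferMatrix, Fin.consEquiv, Equiv.coe_fn_mk, Matrix.of_apply, hmono,
      Fin.cons_zero, ← Fin.succ_last, Fin.cons_succ, Fin.prod_univ_succ, ite_zero_mul_ite_zero]
    exact if_congr (by tauto) rfl rfl

end Transfer

section LeastSucc

variable {μ ν : ℕ → ℕ}

/-- The top row of column `j` of `μ/ν`, if that column is nonempty. -/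
noncomputable def topRow (ν : ℕ → ℕ) (j : ℕ) : ℕ := sInf {i | ν i ≤ j}

lemma topRow_le {i j : ℕ} (hi : ν i ≤ j) : topRow ν j ≤ i := Nat.sInf_le hi

lemma le_of_topRow_le (h : IsSkewShape n μ ν) {i j : ℕ} (hi : topRow ν j ≤ i) :
    ν i ≤ j := by
  have hne : {i | ν i ≤ j}.Nonempty :=
    ⟨n, (h.inner_le n).trans ((h.outer_eq_zero n le_rfl).trans_le j.zero_le)⟩
  exact (h.inner.1 _ i hi).trans (Nat.sInf_mem hne)

lemma topRow_antitone (h : IsSkewShape n μ ν) : Antitone (topRow ν) := fun _ _ hj =>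
  topRow_le ((le_of_topRow_le h le_rfl).trans hj)

lemma cell_of_topRow_le (h : IsSkewShape n μ ν) {i j r : ℕ} (hc : cell μ ν i j)
    (hr : topRow ν j ≤ r) (hri : r ≤ i) : cell μ ν r j :=
  ⟨le_of_topRow_le h hr, hc.2.trans_le (h.outer.1 r i hri)⟩

variable (μ ν) in
/-- `G` may stand immediately to the left of `F`: rows stay weakly increasing across the seam. -/
def Precedes (G F : ℕ → ℕ → ℕ) : Prop :=
  ∀ i j, cell μ ν i j → cell μ ν i (j + 1) → G i j ≤ F i (j + 1)

variable (μ ν) in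
def leftEntry (G : ℕ → ℕ → ℕ) (r j : ℕ) : ℕ :=
  if 0 < j ∧ cell μ ν r (j - 1) then G r (j - 1) else 0

variable (μ ν) in
/-- The least SSYT `F` with `Precedes μ ν G F`: an entry must be positive, at least its left
neighbour in `G`, and larger than the entries above it. -/
noncomputable def leastSucc (G : ℕ → ℕ → ℕ) (i j : ℕ) : ℕ :=
  if cell μ ν i j then (Icc (topRow ν j) i).sup fun r => max 1 (leftEntry μ ν G r j) + (i - r)
  else 0

variable (μ ν) in
/-- The least SSYT of shape `μ/ν`: its columns read `1, 2, 3, …` from the top. -/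
noncomputable def minTab (i j : ℕ) : ℕ :=
  if cell μ ν i j then i + 1 - topRow ν j else 0

variable {G F : ℕ → ℕ → ℕ}

lemma le_leastSucc {i j r : ℕ} (hc : cell μ ν i j) (hr : topRow ν j ≤ r) (hri : r ≤ i) :
    max 1 (leftEntry μ ν G r j) + (i - r) ≤ leastSucc μ ν G i j := by
  rw [leastSucc, if_pos hc]
  exact le_sup (f := fun r => max 1 (leftEntry μ ν G r j) + (i - r)) (mem_Icc.mpr ⟨hr, hri⟩)

lemma le_leastSucc_succ {i j : ℕ} (hc : cell μ ν i j) (hc' : cell μ ν i (j + 1)) :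
    G i j ≤ leastSucc μ ν G i (j + 1) := by
  have := le_leastSucc (G := G) hc' (topRow_le hc'.1) le_rfl
  simp only [leftEntry, Nat.add_sub_cancel, if_pos (And.intro j.succ_pos hc)] at this
  omega

lemma leastSucc_le (h : IsSkewShape n μ ν) (hG : Precedes μ ν G F) (hF : IsSSYTFun n μ ν F) :
    leastSucc μ ν G ≤ F := fun i j => by
  change leastSucc μ ν G i j ≤ F i j
  by_cases hc : cell μ ν i j
  · rw [leastSucc, if_pos hc]
    refine Finset.sup_le fun r hr => ?_
    obtain ⟨hr, hri⟩ := mem_Icc.mp hr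
    have hcr := cell_of_topRow_le h hc hr hri
    have hleft : max 1 (leftEntry μ ν G r j) ≤ F r j := by
      refine max_le (hF.one_le r j hcr) ?_
      rw [leftEntry]
      split_ifs with hj
      · have := hG r (j - 1) hj.2 (by rwa [Nat.sub_add_cancel hj.1])
        rwa [Nat.sub_add_cancel hj.1] at this
      · exact Nat.zero_le _
    have := hF.add_le_of_col h hcr hc hri
    omega
  · rw [leastSucc, if_neg hc]
    exact Nat.zero_le _

lemma precedes_iff_leastSucc_le (h : IsSkewShape n μ ν) (hF : IsSSYTFun n μ ν F) :
    Precedes μ ν G F ↔ leastSucc μ ν G ≤ F :=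
  ⟨fun hGF => leastSucc_le h hGF hF, fun hle i j hc hc' =>
    (le_leastSucc_succ hc hc').trans (hle i (j + 1))⟩

lemma IsSSYTFun.precedes_self (hG : IsSSYTFun n μ ν G) : Precedes μ ν G G := hG.row_le

lemma isSSYTFun_leastSucc (h : IsSkewShape n μ ν) (hG : IsSSYTFun n μ ν G) :
    IsSSYTFun n μ ν (leastSucc μ ν G) := by
  have hle := leastSucc_le h hG.precedes_self hG
  refine ⟨fun i j hc => ?_, fun i j hc => (hle i j).trans (hG.le_n i j hc),
    fun i j hc hc' => (hle i j).trans (le_leastSucc_succ hc hc'), fun i j hc hc' => ?_,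
    fun i j hc => if_neg hc⟩
  · have := le_leastSucc (G := G) hc (topRow_le hc.1) le_rfl
    omega
  · obtain ⟨r, hr, hsup⟩ := exists_mem_eq_sup (Icc (topRow ν j) i)
      ⟨i, mem_Icc.mpr ⟨topRow_le hc.1, le_rfl⟩⟩
      fun r => max 1 (leftEntry μ ν G r j) + (i - r)
    obtain ⟨hr, hri⟩ := mem_Icc.mp hr
    have := le_leastSucc (G := G) hc' hr (hri.trans i.le_succ)
    rw [leastSucc, if_pos hc, hsup]
    omega

lemma isSSYTFun_minTab (h : IsSkewShape n μ ν) : IsSSYTFun n μ ν (minTab μ ν) := by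
  refine ⟨fun i j hc => ?_, fun i j hc => ?_, fun i j hc hc' => ?_, fun i j hc hc' => ?_,
    fun i j hc => if_neg hc⟩
  · have := topRow_le hc.1
    rw [minTab, if_pos hc]
    omega
  · have := h.row_lt_of_cell hc
    rw [minTab, if_pos hc]
    omega
  · have := topRow_antitone h (Nat.le_add_right j 1)
    rw [minTab, if_pos hc, minTab, if_pos hc']
    omega
  · have := topRow_le hc.1
    rw [minTab, if_pos hc, minTab, if_pos hc']
    omega

lemma minTab_le (h : IsSkewShape n μ ν) (hF : IsSSYTFun n μ ν F) : minTab μ ν ≤ F :=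
  fun i j => by
  change minTab μ ν i j ≤ F i j
  by_cases hc : cell μ ν i j
  · have hle := topRow_le hc.1
    have htop := cell_of_topRow_le h hc le_rfl hle
    have := hF.add_le_of_col h htop hc hle
    have := hF.one_le _ j htop
    rw [minTab, if_pos hc]
    omega
  · rw [minTab, if_neg hc]
    exact Nat.zero_le _

lemma leastSucc_le_minTab (h : IsSkewShape n μ ν) {i j : ℕ}
    (hleft : ∀ r, 0 < j → cell μ ν r (j - 1) → G r (j - 1) ≤ minTab μ ν r (j - 1)) :
    leastSucc μ ν G i j ≤ minTab μ ν i j := by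
  by_cases hc : cell μ ν i j
  · rw [leastSucc, if_pos hc, minTab, if_pos hc]
    refine Finset.sup_le fun r hr => ?_
    obtain ⟨hr, hri⟩ := mem_Icc.mp hr
    have : max 1 (leftEntry μ ν G r j) ≤ r + 1 - topRow ν j := by
      refine max_le (by omega) ?_
      rw [leftEntry]
      split_ifs with hj
      · have := hleft r hj.1 hj.2
        rw [minTab, if_pos hj.2] at this
        have := topRow_antitone h (Nat.sub_le j 1)
        omega
      · exact Nat.zero_le _
    omega
  · rw [leastSucc, if_neg hc, minTab, if_neg hc]

lemma leastSucc_eq_self_iff (h : IsSkewShape n μ ν) (hG : IsSSYTFun n μ ν G) :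
    leastSucc μ ν G = G ↔ G = minTab μ ν := by
  refine ⟨fun hfix => le_antisymm (fun i j => ?_) (minTab_le h hG), ?_⟩
  · induction j generalizing i with
    | zero => exact hfix ▸ leastSucc_le_minTab h fun r hj => absurd hj (lt_irrefl 0)
    | succ j ih =>
      rw [← hfix]
      exact leastSucc_le_minTab h fun r _ _ => ih r
  · rintro rfl
    exact le_antisymm (leastSucc_le h hG.precedes_self hG)
      (minTab_le h (isSSYTFun_leastSucc h hG))

end LeastSucc

section Stretch

variable {μ ν : ℕ → ℕ}

lemma cell_mul_iff {K : ℕ} (hK : 0 < K) {i j : ℕ} :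
    cell (fun r => K * μ r) (fun r => K * ν r) i j ↔ cell μ ν i (j / K) := by
  simp only [cell, Nat.le_div_iff_mul_le hK, Nat.div_lt_iff_lt_mul hK, mul_comm K]

lemma cell_mul_add_iff {K q t i : ℕ} (ht : t < K) :
    cell (fun r => K * μ r) (fun r => K * ν r) i (K * q + t) ↔ cell μ ν i q := by
  rw [cell_mul_iff (by omega), (Nat.mul_add_div_mod_of_lt ht).1]

variable (μ ν) in
def layer (K : ℕ) (e : ℕ → ℕ → ℕ) (t i j : ℕ) : ℕ :=
  if cell μ ν i j then e i (K * j + t) else 0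

variable (μ ν) in
def interleave (m : ℕ) (c : Fin (m + 1) → ℕ → ℕ → ℕ) (i j : ℕ) : ℕ :=
  if cell (fun r => (m + 1) * μ r) (fun r => (m + 1) * ν r) i j then
    c (Fin.ofNat (m + 1) j) i (j / (m + 1))
  else 0

lemma cellMonomial_mul (K : ℕ) (e : ℕ → ℕ → ℕ) :
    cellMonomial n (fun j => K * μ j) (fun j => K * ν j) e =
      ∏ t ∈ range K, cellMonomial n μ ν (layer μ ν K e t) := by
  calc cellMonomial n (fun j => K * μ j) (fun j => K * ν j) e
      = ∏ i ∈ range n, ∏ t ∈ range K, ∏ q ∈ Ico (ν i) (μ i),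
          entryVar n (e i (K * q + t)) := by
        rw [cellMonomial]
        refine prod_congr rfl fun i _ => ?_
        rw [prod_Ico_mul, prod_comm]
    _ = ∏ t ∈ range K, cellMonomial n μ ν (layer μ ν K e t) := by
        rw [prod_comm]
        refine prod_congr rfl fun t _ => prod_congr rfl fun i _ => prod_congr rfl fun q hq => ?_
        rw [layer, if_pos (show cell μ ν i q from mem_Ico.mp hq)]

variable {K : ℕ} {e : ℕ → ℕ → ℕ}

lemma isSSYTFun_layer (he : IsSSYTFun n (fun j => K * μ j) (fun j => K * ν j) e) {t : ℕ}
    (ht : t < K) : IsSSYTFun n μ ν (layer μ ν K e t) := by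
  have hcell {i j} (hc : cell μ ν i j) := (cell_mul_add_iff (q := j) ht).mpr hc
  refine ⟨fun i j hc => ?_, fun i j hc => ?_, fun i j hc hc' => ?_, fun i j hc hc' => ?_,
    fun i j hc => if_neg hc⟩
  · rw [layer, if_pos hc]
    exact he.one_le _ _ (hcell hc)
  · rw [layer, if_pos hc]
    exact he.le_n _ _ (hcell hc)
  · rw [layer, if_pos hc, layer, if_pos hc']
    exact he.row_mono (hcell hc) (hcell hc') (by rw [mul_add]; omega)
  · rw [layer, if_pos hc, layer, if_pos hc']
    exact he.col_lt _ _ (hcell hc) (hcell hc')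

lemma layer_mono (he : IsSSYTFun n (fun j => K * μ j) (fun j => K * ν j) e) {t t' : ℕ}
    (htt' : t ≤ t') (ht' : t' < K) : layer μ ν K e t ≤ layer μ ν K e t' := fun i j => by
  change layer μ ν K e t i j ≤ layer μ ν K e t' i j
  by_cases hc : cell μ ν i j
  · rw [layer, if_pos hc, layer, if_pos hc]
    exact he.row_mono ((cell_mul_add_iff (by omega)).mpr hc) ((cell_mul_add_iff ht').mpr hc)
      (by omega)
  · rw [layer, if_neg hc, layer, if_neg hc]

lemma precedes_layer (he : IsSSYTFun n (fun j => K * μ j) (fun j => K * ν j) e) (hK : 0 < K) :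
    Precedes μ ν (layer μ ν K e (K - 1)) (layer μ ν K e 0) := by
  intro i j hc hc'
  rw [layer, if_pos hc, layer, if_pos hc']
  have hsucc : K * j + (K - 1) + 1 = K * (j + 1) + 0 := by rw [mul_add]; omega
  have := he.row_le i (K * j + (K - 1)) ((cell_mul_add_iff (by omega)).mpr hc)
    (hsucc ▸ (cell_mul_add_iff hK).mpr hc')
  rwa [hsucc] at this

variable {m : ℕ}

lemma interleave_apply (c : Fin (m + 1) → ℕ → ℕ → ℕ) {i q t : ℕ} (ht : t < m + 1) :
    interleave μ ν m c i ((m + 1) * q + t) = if cell μ ν i q then c ⟨t, ht⟩ i q else 0 := by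
  have hofNat : Fin.ofNat (m + 1) ((m + 1) * q + t) = ⟨t, ht⟩ :=
    Fin.ext (by rw [Fin.val_ofNat, (Nat.mul_add_div_mod_of_lt ht).2])
  rw [interleave, (Nat.mul_add_div_mod_of_lt ht).1, hofNat]
  exact if_congr (cell_mul_add_iff ht) rfl rfl

lemma isSSYTFun_interleave {c : Fin (m + 1) → Tab n μ ν} (hmono : Monotone c)
    (hprec : Precedes μ ν (c (Fin.last m)).1 (c 0).1) :
    IsSSYTFun n (fun j => (m + 1) * μ j) (fun j => (m + 1) * ν j)
      (interleave μ ν m fun t => (c t).1) := by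
  refine ⟨fun i j hc => ?_, fun i j hc => ?_, fun i j hc hc' => ?_, fun i j hc hc' => ?_,
    fun i j hc => if_neg hc⟩ <;> obtain ⟨q, t, ht, rfl⟩ := Nat.exists_eq_mul_add m.succ_pos j
  · rw [cell_mul_add_iff ht] at hc
    rw [interleave_apply _ ht, if_pos hc]
    exact (c _).2.one_le i q hc
  · rw [cell_mul_add_iff ht] at hc
    rw [interleave_apply _ ht, if_pos hc]
    exact (c _).2.le_n i q hc
  · rw [cell_mul_add_iff ht] at hc
    rw [interleave_apply _ ht, if_pos hc]
    rcases Nat.lt_succ_iff_lt_or_eq.mp ht with ht' | ht'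
    · rw [show (m + 1) * q + t + 1 = (m + 1) * q + (t + 1) by ring] at hc' ⊢
      rw [cell_mul_add_iff (by omega)] at hc'
      rw [interleave_apply _ (by omega), if_pos hc']
      exact hmono (Fin.mk_le_mk.mpr t.le_succ) i q
    · have hlast : (⟨t, ht⟩ : Fin (m + 1)) = Fin.last m := Fin.ext ht'
      rw [show (m + 1) * q + t + 1 = (m + 1) * (q + 1) + 0 by rw [ht']; ring] at hc' ⊢
      rw [cell_mul_add_iff m.succ_pos] at hc'
      rw [interleave_apply _ m.succ_pos, if_pos hc', hlast]
      exact hprec i q hc hc'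
  · rw [cell_mul_add_iff ht] at hc hc'
    rw [interleave_apply _ ht, if_pos hc, interleave_apply _ ht, if_pos hc']
    exact (c _).2.col_lt i q hc hc'

lemma layer_interleave {c : Fin (m + 1) → ℕ → ℕ → ℕ} (hc : ∀ t, IsSSYTFun n μ ν (c t))
    (t : Fin (m + 1)) : layer μ ν (m + 1) (interleave μ ν m c) t = c t :=
  funext₂ fun i j => by
  by_cases hij : cell μ ν i j
  · rw [layer, if_pos hij, interleave_apply _ t.2, if_pos hij]
  · rw [layer, if_neg hij, (hc t).eq_zero i j hij]

lemma interleave_layer (he : IsSSYTFun n (fun j => (m + 1) * μ j) (fun j => (m + 1) * ν j) e) :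
    interleave μ ν m (fun t => layer μ ν (m + 1) e t) = e := funext₂ fun i j => by
  obtain ⟨q, t, ht, rfl⟩ := Nat.exists_eq_mul_add m.succ_pos j
  rw [interleave_apply _ ht, layer]
  by_cases hiq : cell μ ν i q
  · rw [if_pos hiq, if_pos hiq]
  · rw [if_neg hiq, he.eq_zero i _ ((cell_mul_add_iff ht).not.mpr hiq)]

end Stretch

section CyclicChain

variable {μ ν : ℕ → ℕ}

variable (μ ν) in
/-- Chains `c 0 ≤ ⋯ ≤ c m` whose last member may stand to the left of the first: these are
the layers of an SSYT of shape `(m + 1)μ/(m + 1)ν`. -/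
def IsCyclicChain {m : ℕ} (c : Fin (m + 1) → Tab n μ ν) : Prop :=
  Monotone c ∧ Precedes μ ν (c (Fin.last m)).1 (c 0).1

lemma bijOn_interleave (m : ℕ) :
    Set.BijOn (fun c : Fin (m + 1) → Tab n μ ν => interleave μ ν m fun t => (c t).1)
      {c | IsCyclicChain μ ν c}
      {e | IsSSYTFun n (fun j => (m + 1) * μ j) (fun j => (m + 1) * ν j) e} := by
  refine ⟨fun c hc => isSSYTFun_interleave hc.1 hc.2, fun c _ c' _ hcc' => ?_, fun e he => ?_⟩
  · funext t
    apply Subtype.ext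
    rw [← layer_interleave (fun t => (c t).2) t, ← layer_interleave (fun t => (c' t).2) t]
    exact congrArg (layer μ ν (m + 1) · t) hcc'
  · refine ⟨fun t => ⟨layer μ ν (m + 1) e t, isSSYTFun_layer he t.2⟩,
      ⟨fun s t hst => layer_mono he hst t.2, ?_⟩, interleave_layer he⟩
    simpa using precedes_layer he m.succ_pos

lemma schur_zero_mul (h : IsSkewShape n μ ν) :
    schur n (fun j => 0 * μ j) (fun j => 0 * ν j) = 1 := by
  have hzero : {e | IsSSYTFun n (fun j => 0 * μ j) (fun j => 0 * ν j) e} = {0} := by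
    have hcell (i j : ℕ) : ¬ cell (fun j => 0 * μ j) (fun j => 0 * ν j) i j := fun hc => by
      simpa using hc.2
    ext e
    simp only [Set.mem_ofPred_eq, Set.mem_singleton_iff]
    refine ⟨fun he => funext₂ fun i j => he.eq_zero i j (hcell i j), ?_⟩
    rintro rfl
    exact ⟨fun i j hc => (hcell i j hc).elim, fun i j hc => (hcell i j hc).elim,
      fun i j hc => (hcell i j hc).elim, fun i j hc => (hcell i j hc).elim, fun _ _ _ => rfl⟩
  rw [schur_eq_finsum (h.mul 0), hzero, finsum_mem_singleton]
  simp [cellMonomial]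

variable [Fintype (Tab n μ ν)]

lemma schur_succ_mul (h : IsSkewShape n μ ν) (m : ℕ) :
    schur n (fun j => (m + 1) * μ j) (fun j => (m + 1) * ν j) =
      ∑ c : Fin (m + 1) → Tab n μ ν,
        if IsCyclicChain μ ν c then ∏ t, cellMonomial n μ ν (c t).1 else 0 := by
  rw [schur_eq_finsum (h.mul (m + 1)), ← finsum_mem_setOf_eq_sum_ite,
    ← finsum_mem_eq_of_bijOn _ (bijOn_interleave m) fun c _ => ?_]
  rw [cellMonomial_mul, ← Fin.prod_univ_eq_prod_range]
  exact prod_congr rfl fun t _ => by rw [layer_interleave (fun t => (c t).2)]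

noncomputable def leastSuccTab (h : IsSkewShape n μ ν) (G : Tab n μ ν) : Tab n μ ν :=
  ⟨leastSucc μ ν G.1, isSSYTFun_leastSucc h G.2⟩

lemma sum_transferMatrix_pow_succ_apply_leastSuccTab (h : IsSkewShape n μ ν) (m : ℕ) :
    ∑ G, (transferMatrix n μ ν ^ (m + 1)) (leastSuccTab h G) G =
      ∑ c : Fin (m + 1) → Tab n μ ν,
        if IsCyclicChain μ ν c then ∏ t, cellMonomial n μ ν (c t).1 else 0 := by
  simp_rw [transferMatrix_pow_succ_apply]
  rw [sum_comm]
  refine sum_congr rfl fun c _ => ?_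
  rw [sum_eq_single (c (Fin.last m)) (fun G _ hG => if_neg fun hc => hG hc.2.2.symm)
    (by simp)]
  simp only [and_true]
  exact if_congr (and_congr_right' (precedes_iff_leastSucc_le h (c 0).2).symm) rfl rfl

lemma sum_one_apply_leastSuccTab (h : IsSkewShape n μ ν) :
    ∑ G, (1 : Matrix (Tab n μ ν) (Tab n μ ν) (MvPolynomial (Fin n) ℤ)) (leastSuccTab h G) G
      = 1 := by
  have hfix (G : Tab n μ ν) :
      leastSuccTab h G = G ↔ G = ⟨minTab μ ν, isSSYTFun_minTab h⟩ := by
    simp only [leastSuccTab, Subtype.ext_iff, leastSucc_eq_self_iff h G.2]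
  simp only [Matrix.one_apply, hfix, sum_ite_eq', mem_univ, if_true]

theorem schur_mul_eq_sum_transferMatrix_pow (h : IsSkewShape n μ ν) (k : ℕ) :
    schur n (fun j => k * μ j) (fun j => k * ν j) =
      ∑ G, (transferMatrix n μ ν ^ k) (leastSuccTab h G) G := by
  cases k with
  | zero => rw [schur_zero_mul h, pow_zero, sum_one_apply_leastSuccTab h]
  | succ m => rw [schur_succ_mul h, sum_transferMatrix_pow_succ_apply_leastSuccTab h]

end CyclicChain

end StretchedSchur

open StretchedSchur

theorem stretched_schur_recurrence_pure_general (n : ℕ) (mu nu : ℕ → ℕ)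
    (hm : IsPartition mu) (hn : IsPartition nu)
    (hmlen : ∀ i, n ≤ i → mu i = 0)
    (hnm : ∀ i, nu i ≤ mu i) :
    ∀ k : ℕ,
      ∑ i ∈ Finset.range ((charPoly n mu nu).natDegree + 1),
        (charPoly n mu nu).coeff i *
          schur n (fun j => (k + i) * mu j) (fun j => (k + i) * nu j) = 0 := by
  intro k
  have h : IsSkewShape n mu nu := ⟨hm, hn, hnm, hmlen⟩
  have := h.finite_tab
  have := Fintype.ofFinite (Tab n mu nu)
  simp_rw [charPoly_eq_charpoly h, schur_mul_eq_sum_transferMatrix_pow h, mul_sum]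
  rw [sum_comm]
  simp_rw [Matrix.sum_coeff_mul_pow_add_apply, Matrix.aeval_self_charpoly, mul_zero,
    Matrix.zero_apply, sum_const_zero]

/-- For partitions `μ ⊇ ν` of length at most `n`, the sequence
`s_{kμ/kν}(x₁,…,xₙ)`, `k = 0,1,2,…`, satisfies the linear recurrence with
characteristic polynomial `χ(t) = ∏_{T ∈ T^n_{μ/ν}} (t − x^{w(T)})`. -/
theorem stretched_schur_recurrence_pure (n : ℕ) (mu nu : ℕ → ℕ)
    (hm : IsPartition mu) (hn : IsPartition nu)
    (hmlen : ∀ i, n ≤ i → mu i = 0) (hnlen : ∀ i, n ≤ i → nu i = 0)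
    (hnm : ∀ i, nu i ≤ mu i) :
    ∀ k : ℕ,
      ∑ i ∈ Finset.range ((charPoly n mu nu).natDegree + 1),
        (charPoly n mu nu).coeff i *
          schur n (fun j => (k + i) * mu j) (fun j => (k + i) * nu j) = 0 :=
  stretched_schur_recurrence_pure_general n mu nu hm hn hmlen hnm
end

section
/- If the Kostka coefficient K_{λ/μ, w} is positive, then for every positive integer k the Kostka coefficient K_{kλ/kμ, kw} is positive. -/
open scoped BigOperators

/-!
Stretch a tableau of shape `λ/μ` and weight `w` horizontally: scale the skew part by `k` and
repeat every entry `k` times in place within its row. Rows stay weakly increasing, and column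
`j` of the stretched tableau is column `j / k` of the original, so columns stay strictly
increasing. The result is a tableau of shape `kλ/kμ` and weight `kw`.
-/

namespace List

variable {α : Type*}

def stretch (k : ℕ) : List α → List α
  | [] => []
  | a :: l => replicate k a ++ l.stretch k

variable {k : ℕ}

@[simp]
lemma stretch_nil : ([] : List α).stretch k = [] := rfl

lemma stretch_cons (a : α) (l : List α) : (a :: l).stretch k = replicate k a ++ l.stretch k :=
  rfl

@[simp]
lemma length_stretch (l : List α) : (l.stretch k).length = k * l.length := by
  induction l with
  | nil => simp
  | cons a l ih => simp [stretch_cons, ih, Nat.mul_succ, Nat.add_comm]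

lemma count_stretch [BEq α] [LawfulBEq α] (v : α) (l : List α) : (l.stretch k).count v = k * l.count v := by
  induction l with
  | nil => simp
  | cons a l ih =>
    rw [stretch_cons, count_append, ih, count_replicate, count_cons]
    split_ifs <;> simp_all [Nat.mul_succ, Nat.add_comm]

lemma mem_of_mem_stretch {x : α} {l : List α} (h : x ∈ l.stretch k) : x ∈ l := by
  induction l with
  | nil => simp at h
  | cons a l ih =>
    rcases mem_append.1 h with h | h
    · simp [eq_of_mem_replicate h]
    · exact mem_cons_of_mem _ (ih h)

lemma Pairwise.stretch [Preorder α] {l : List α} (h : l.Pairwise (· ≤ ·)) :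
    (l.stretch k).Pairwise (· ≤ ·) := by
  induction l with
  | nil => simp
  | cons a l ih =>
    rw [pairwise_cons] at h
    refine pairwise_append.2 ⟨pairwise_replicate.2 (Or.inr le_rfl), ih h.2, ?_⟩
    rintro x hx y hy
    rw [eq_of_mem_replicate hx]
    exact h.1 y (mem_of_mem_stretch hy)

lemma getD_stretch (hk : 0 < k) (l : List α) (p : ℕ) (d : α) :
    (l.stretch k).getD p d = l.getD (p / k) d := by
  induction l generalizing p with
  | nil => simp
  | cons a l ih =>
    rcases lt_or_ge p k with hp | hp
    · rw [stretch_cons, getD_append _ _ _ _ (by simpa using hp), Nat.div_eq_of_lt hp,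
        getD_cons_zero, getD_replicate (h := hp)]
    · obtain ⟨q, rfl⟩ : ∃ q, p = q + k := ⟨p - k, by omega⟩
      rw [stretch_cons, getD_append_right _ _ _ _ (by simp [hp]), length_replicate,
        Nat.add_sub_cancel, ih, Nat.add_div_right _ hk, getD_cons_succ]

end List

lemma finite_lists_length_le_of_forall_le (m n : ℕ) :
    {l : List ℕ | l.length ≤ m ∧ ∀ x ∈ l, x ≤ n}.Finite := by
  refine ((List.finite_length_le {x // x ≤ n} m).image (List.map Subtype.val)).subset ?_
  rintro l ⟨hlen, hle⟩
  lift l to List {x // x ≤ n} using hle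
  exact ⟨l, by simpa using hlen, rfl⟩

lemma IsPartition.const_mul {f : ℕ → ℕ} (hf : IsPartition f) (k : ℕ) :
    IsPartition (fun i => k * f i) := by
  obtain ⟨hmono, N, hN⟩ := hf
  exact ⟨fun i j hij => Nat.mul_le_mul_left k (hmono i j hij), N, fun i hi => by simp [hN i hi]⟩

namespace SkewTab

variable {n : ℕ}

def stretch (k : ℕ) (T : SkewTab n) : SkewTab n where
  inner := fun i => k * T.inner i
  row := fun i => (T.row i).stretch k

variable {k : ℕ}

lemma outer_stretch (T : SkewTab n) : (T.stretch k).outer = fun i => k * T.outer i := by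
  funext i
  simp [outer, stretch, Nat.mul_add]

lemma entry_stretch (hk : 0 < k) (T : SkewTab n) (i j : ℕ) :
    (T.stretch k).entry i j = T.entry i (j / k) := by
  simp only [entry, stretch, List.getD_stretch hk, Nat.sub_mul_div]

lemma wt_stretch (T : SkewTab n) (v : ℕ) : (T.stretch k).wt v = k * T.wt v := by
  simp only [wt, stretch, List.count_stretch, mul_finsum]

lemma IsSSYT.stretch (hk : 0 < k) {T : SkewTab n} (hT : T.IsSSYT) : (T.stretch k).IsSSYT := by
  obtain ⟨hinner, houter, hrow, hbound, hcol⟩ := hT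
  refine ⟨hinner.const_mul k, outer_stretch T ▸ houter.const_mul k,
    fun i => (hrow i).stretch, fun i x hx => hbound i x (List.mem_of_mem_stretch hx), ?_⟩
  intro i j hi hi' hs hs'
  simp only [outer_stretch] at hi' hs'
  rw [entry_stretch hk, entry_stretch hk]
  apply hcol i (j / k) <;>
    first
    | exact (Nat.le_div_iff_mul_le hk).2 (by rwa [mul_comm])
    | exact (Nat.div_lt_iff_lt_mul hk).2 (by rwa [mul_comm])

end SkewTab

section Tabs

variable {n : ℕ} {A B : ℕ → ℕ} {T : SkewTab n}

lemma stretch_mem_tabs {k : ℕ} (hk : 0 < k) (hT : T ∈ Tabs n A B) :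
    T.stretch k ∈ Tabs n (fun i => k * A i) (fun i => k * B i) := by
  obtain ⟨hssyt, rfl, rfl⟩ := hT
  exact ⟨hssyt.stretch hk, rfl, SkewTab.outer_stretch T⟩

lemma length_row_le_of_mem_tabs (hT : T ∈ Tabs n A B) (i : ℕ) : (T.row i).length ≤ A i := by
  obtain ⟨-, -, rfl⟩ := hT
  exact Nat.le_add_left _ _

/-- A tableau of outer shape `A` is determined by its first `N` rows, where `A` vanishes from
`N` on, and each of these rows is a list of length at most `A 0` with entries at most `n`. -/
lemma finite_tabs (hA : IsPartition A) : (Tabs n A B).Finite := by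
  obtain ⟨hmono, N, hN⟩ := hA
  refine Set.Finite.of_finite_image (f := fun T (i : Fin N) => T.row i) ?_ ?_
  · refine (Set.Finite.pi fun _ => finite_lists_length_le_of_forall_le (A 0) n).subset ?_
    rintro _ ⟨T, hT, rfl⟩ i -
    exact ⟨(length_row_le_of_mem_tabs hT i).trans (hmono 0 i i.val.zero_le),
      fun x hx => (hT.1.2.2.2.1 i x hx).2⟩
  · rintro ⟨I, R⟩ hT ⟨I', R'⟩ hT' hrows
    obtain rfl : I = I' := hT.2.1.trans hT'.2.1.symm
    congr 1
    funext i
    by_cases hi : i < N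
    · exact congrFun hrows ⟨i, hi⟩
    · have h := length_row_le_of_mem_tabs hT i
      have h' := length_row_le_of_mem_tabs hT' i
      rw [hN i (not_lt.1 hi), Nat.le_zero, List.length_eq_zero_iff] at h h'
      exact h.trans h'.symm

end Tabs

theorem kostka_stretch_pos_general (n : ℕ) (lam mu : ℕ → ℕ)
    (w : Fin n → ℕ) (hpos : 0 < kostka n lam mu w) (k : ℕ) (hk : 0 < k) :
    0 < kostka n (fun i => k * lam i) (fun i => k * mu i) (fun i => k * w i) := by
  obtain ⟨⟨⟨T, hT, hw⟩⟩, -⟩ := Nat.card_pos_iff.1 hpos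
  have hkT := stretch_mem_tabs hk hT
  have hfin : (Tabs n (fun i => k * lam i) (fun i => k * mu i)).Finite :=
    finite_tabs (hkT.2.2 ▸ hkT.1.2.1)
  refine Nat.card_pos_iff.2 ⟨⟨⟨T.stretch k, hkT, fun v => by rw [SkewTab.wt_stretch, hw]⟩⟩, ?_⟩
  exact (hfin.subset fun _ h => h.1).to_subtype

/-- If `K_{λ/μ,w} > 0` then `K_{kλ/kμ,kw} > 0` for every positive
integer `k`. -/
theorem kostka_stretch_pos (n : ℕ) (lam mu : ℕ → ℕ)
    (hl : IsPartition lam) (hm : IsPartition mu) (hml : ∀ i, mu i ≤ lam i)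
    (w : Fin n → ℕ) (hpos : 0 < kostka n lam mu w) (k : ℕ) (hk : 0 < k) :
    0 < kostka n (fun i => k * lam i) (fun i => k * mu i) (fun i => k * w i) :=
  kostka_stretch_pos_general n lam mu w hpos k hk
end
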